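/- arXiv:1803.09991 — 4 statements merged into one kernel-verified Lean document; each statement's English description precedes it below -/
import Mathlib

section
/- Fibonacci activity: over Σ = {1,2}, define s, t ∈ FEnd(Σ*) by s(1u) = 1·t(u), s(2u) = 1·s(u), t(1u) = 1·u, t(2u) = 2·s(u) for all u ∈ Σ*. Then α_s(1) = 1, α_s(2) = 2, and α_s(n+2) = α_s(n+1) + α_s(n) for all n ≥ 1 (so α_s(n) is a Fibonacci number); consequently lim_{n→∞} (log α_s(n))/n = log((1+√5)/2), the logarithm of the golden ratio. -/
open Filter Topology

namespace AutHier

variable {A : Type*}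

/-- The section (state) `f|_u` of a transformation `f : Σ* → Σ*` at the word `u`. -/
def sec (f : List A → List A) (u : List A) : List A → List A :=
  fun v => (f (u ++ v)).drop u.length

/-- `f` is an endomorphism of `Σ*`: it preserves lengths and prefixes. -/
def IsEnd (f : List A → List A) : Prop :=
  (∀ u, (f u).length = u.length) ∧ ∀ u v, f u <+: f (u ++ v)

/-- `f` is a finite-state endomorphism of `Σ*` (an element of `FEnd(Σ*)`). -/
def IsFEnd (f : List A → List A) : Prop :=
  IsEnd f ∧ {g | ∃ u, g = sec f u}.Finite

/-- The activity `α_f(n)` of a transformation `f`: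
the number of words `v` of length `n` which are images of some word `u`
of length `n` whose section `f|_u` is nontrivial. -/
noncomputable def activity (f : List A → List A) (n : ℕ) : ℕ :=
  Set.ncard {v : List A | v.length = n ∧
    ∃ u : List A, u.length = n ∧ sec f u ≠ id ∧ f u = v}

/-- The class `SP(d)` of finite-state endomorphisms of
polynomial activity of degree at most `d`. -/
def SP (A : Type*) (d : ℤ) : Set (List A → List A) :=
  {t | IsFEnd t ∧
    Tendsto (fun n : ℕ => (activity t n : ℝ) / (n : ℝ) ^ (d + 1)) atTop (𝓝 0)}

/-- The class `SE(l)` of finite-state endomorphisms of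
exponential activity of growth rate at most `l`. -/
def SE (A : Type*) (l : ℝ) : Set (List A → List A) :=
  {t | IsFEnd t ∧
    limsup (fun n : ℕ => Real.log (activity t n) / (n : ℝ)) atTop ≤ l}

/-- The stateset `Q'(t)` of the pruned automaton: all sections of `t` except `id`. -/
def Qp (t : List A → List A) : Set (List A → List A) :=
  {g | ∃ u, g = sec t u} \ {id}

/-- One-letter transition of the determinized pruned output automaton of `t`. -/
def delta (t : List A → List A) (S : Set (List A → List A)) (y : A) :
    Set (List A → List A) :=
  {s' | s' ∈ Qp t ∧ ∃ s ∈ S, ∃ x : A, s [x] = [y] ∧ sec s [x] = s'}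

/-- Extended transition function `δ*` of the determinized pruned output automaton. -/
def deltaStar (t : List A → List A) (S : Set (List A → List A)) (v : List A) :
    Set (List A → List A) :=
  v.foldl (delta t) S

/-- There is a chain of `k` cycles in the determinized pruned output automaton of `t`. -/
def ChainOfCycles (t : List A → List A) (k : ℕ) : Prop :=
  ∃ (S : Fin k → Set (List A → List A)) (c : Fin k → List A),
    (∀ i, S i ≠ ∅) ∧ (∀ i, c i ≠ []) ∧
    (∀ h : 0 < k, ∃ v, deltaStar t {t} v = S ⟨0, h⟩) ∧
    (∀ i, deltaStar t (S i) (c i) = S i) ∧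
    (∀ (i : Fin k) (h : (i : ℕ) + 1 < k),
      (∃ v, deltaStar t (S i) v = S ⟨(i : ℕ) + 1, h⟩) ∧
      ¬ (∃ v, deltaStar t (S ⟨(i : ℕ) + 1, h⟩) v = S i))

/-- The edge relation of the orbit signalizer graph `Φ`: from the vertex `v = (s,t)`,
reading the letter `x`, with label `(x; m, ℓ)` where `m, ℓ` are the minimal integers
(`ℓ ≥ 1`) with `(s t^{m+ℓ})·x = (s t^m)·x`, the edge goes to
`v' = (r|_x, (t^ℓ)|_{r·x})` where `r = s t^m`. -/
def OSStep (v : (List A → List A) × (List A → List A)) (x : A) (m ℓ : ℕ)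
    (v' : (List A → List A) × (List A → List A)) : Prop :=
  1 ≤ ℓ ∧ v.2^[m + ℓ] (v.1 [x]) = v.2^[m] (v.1 [x]) ∧
  (∀ m' ℓ' : ℕ, 1 ≤ ℓ' → v.2^[m' + ℓ'] (v.1 [x]) = v.2^[m'] (v.1 [x]) → m ≤ m') ∧
  (∀ ℓ' : ℕ, 1 ≤ ℓ' → v.2^[m + ℓ'] (v.1 [x]) = v.2^[m] (v.1 [x]) → ℓ ≤ ℓ') ∧
  v' = (sec (v.2^[m] ∘ v.1) [x], sec (v.2^[ℓ]) ((v.2^[m] ∘ v.1) [x]))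

/-- A walk of length `n` in the orbit signalizer graph `Φ`. -/
structure OSPath (A : Type*) (n : ℕ) where
  vert : Fin (n + 1) → (List A → List A) × (List A → List A)
  lett : Fin n → A
  idx : Fin n → ℕ
  per : Fin n → ℕ
  step : ∀ k : Fin n, OSStep (vert k.castSucc) (lett k) (idx k) (per k) (vert k.succ)

/-- The inf-index-cost `i⁻(π)` of a walk with indices `idx` and periods `per`. -/
def iminusCost {n : ℕ} (idx per : Fin n → ℕ) : ℕ :=
  ∑ k : Fin n, if idx k = 0 then 0
    else (idx k - 1) * (∏ j ∈ Finset.univ.filter (· < k), per j) + 1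

/-- The sup-index-cost `i⁺(π)` of a walk with indices `idx` and periods `per`. -/
def iplusCost {n : ℕ} (idx per : Fin n → ℕ) : ℕ :=
  ∑ k : Fin n, (∏ j ∈ Finset.univ.filter (· < k), per j) * idx k

/-- The period-cost `p(π)` of a walk with periods `per`. -/
def pCost {n : ℕ} (per : Fin n → ℕ) : ℕ :=
  ∏ k : Fin n, per k

/-- The walk `w` starts at the vertex `(id, t)`, i.e. it is a walk in `Φ(t)` from its root. -/
def IsWalkFrom {n : ℕ} (t : List A → List A) (w : OSPath A n) : Prop :=
  w.vert 0 = (id, t)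

/-- The vertex `v` is accessible from `(id, t)` in `Φ`, i.e. `v` is a vertex of `Φ(t)`. -/
def OSReach (t : List A → List A) (v : (List A → List A) × (List A → List A)) : Prop :=
  ∃ n : ℕ, ∃ w : OSPath A n, IsWalkFrom t w ∧ w.vert (Fin.last n) = v

/-- The set of inf-index-costs of walks in `Φ(t)` from `(id, t)`. -/
def IminusCosts (t : List A → List A) : Set ℕ :=
  {c | ∃ n : ℕ, ∃ w : OSPath A n, IsWalkFrom t w ∧ c = iminusCost w.idx w.per}

/-- The set of sup-index-costs of walks in `Φ(t)` from `(id, t)`. -/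
def IplusCosts (t : List A → List A) : Set ℕ :=
  {c | ∃ n : ℕ, ∃ w : OSPath A n, IsWalkFrom t w ∧ c = iplusCost w.idx w.per}

/-- The set of period-costs of walks in `Φ(t)` from `(id, t)`. -/
def PCosts (t : List A → List A) : Set ℕ :=
  {c | ∃ n : ℕ, ∃ w : OSPath A n, IsWalkFrom t w ∧ c = pCost w.per}

/-- `w` is a simple cycle of `Φ(t)`: a closed walk of positive length, lying in `Φ(t)`,
with no repeated vertices. -/
def IsSimpleCycle {n : ℕ} (t : List A → List A) (w : OSPath A n) : Prop :=
  1 ≤ n ∧ OSReach t (w.vert 0) ∧ w.vert (Fin.last n) = w.vert 0 ∧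
  ∀ j k : Fin (n + 1), (j : ℕ) < n → (k : ℕ) < n → w.vert j = w.vert k → j = k

/-- The pair of transformations `s = stF true` and `t = stF false` over `Σ = {1,2}`
(encoded as `Bool`, `false ↦ 1`, `true ↦ 2`):
`s(1u) = 1·t(u)`, `s(2u) = 1·s(u)`, `t(1u) = 1u`, `t(2u) = 2·s(u)`. -/
def stF : Bool → List Bool → List Bool
  | _, [] => []
  | true, false :: u => false :: stF false u
  | true, true :: u => false :: stF true u
  | false, false :: u => false :: u
  | false, true :: u => true :: stF true u
termination_by _ u => u.length

/-! ### Auxiliary development for the Fibonacci activity theorem -/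

/-- The state automaton of the pair `s = stF true`, `t = stF false`:
`some true` is (the index of) `s`, `some false` is `t`, `none` is `id`. -/
def runST : Option Bool → List Bool → Option Bool
  | g, [] => g
  | some true, false :: u => runST (some false) u
  | some true, true :: u => runST (some true) u
  | some false, false :: u => runST none u
  | some false, true :: u => runST (some true) u
  | none, _ :: u => runST none u

/-- Interpretation of states as transformations. -/
def FST : Option Bool → List Bool → List Bool
  | some b, u => stF b u
  | none, u => u

lemma runST_none : ∀ u : List Bool, runST none u = none := by
  intro u; induction u with
  | nil => rfl
  | cons x v ih => simpa [runST] using ih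

lemma stF_len : ∀ (u : List Bool) (b : Bool), (stF b u).length = u.length := by
  intro u
  induction u with
  | nil => intro b; cases b <;> simp [stF]
  | cons x v ih => intro b; cases b <;> cases x <;> simp [stF, ih]

lemma FST_append : ∀ (u : List Bool) (g : Option Bool) (v : List Bool),
    FST g (u ++ v) = FST g u ++ FST (runST g u) v := by
  intro u
  induction u with
  | nil =>
    intro g v
    rcases g with _ | b
    · rfl
    · cases b <;> simp [FST, runST, stF]
  | cons x w ih =>
    intro g v
    rcases g with _ | b
    · simp [FST, runST, runST_none]
    · cases b
      · cases x
        · simp [FST, runST, stF, runST_none]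
        · simpa [FST, runST, stF] using ih (some true) v
      · cases x
        · simpa [FST, runST, stF] using ih (some false) v
        · simpa [FST, runST, stF] using ih (some true) v

lemma sec_stF (u : List Bool) : sec (stF true) u = FST (runST (some true) u) := by
  funext v
  have h : stF true (u ++ v) = stF true u ++ FST (runST (some true) u) v := by
    simpa [FST] using FST_append u (some true) v
  have hl : u.length = (stF true u).length := (stF_len u true).symm
  simp only [sec, h, hl, List.drop_left]

lemma stF_ne_id (b : Bool) : stF b ≠ id := by
  cases b
  · intro h
    have := congrFun h [true, true]
    simp [stF] at this
  · intro h
    have := congrFun h [true]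
    simp [stF] at this

lemma sec_ne_id_iff (u : List Bool) :
    sec (stF true) u ≠ id ↔ runST (some true) u ≠ none := by
  rw [sec_stF]
  cases h : runST (some true) u with
  | none =>
    constructor
    · intro hne; exact absurd (funext fun u => rfl) hne
    · intro hne; exact absurd rfl hne
  | some b =>
    constructor
    · intro _ hc; cases hc
    · intro _ hc
      exact stF_ne_id b (funext fun u => congrFun hc u)

/-- The acceptance automaton for output words; state `true` is `A = {s}`,
state `false` is `B = {s, t}`. -/
def acc : Bool → List Bool → Bool
  | _, [] => true
  | true, false :: v => acc false v
  | true, true :: _ => false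
  | false, false :: v => acc false v
  | false, true :: v => acc true v

lemma acc_sound : ∀ u : List Bool,
    (runST (some true) u ≠ none →
      acc true (stF true u) = true ∧ acc false (stF true u) = true) ∧
    (runST (some false) u ≠ none → acc false (stF false u) = true) := by
  intro u
  induction u with
  | nil => simp [stF, acc, runST]
  | cons x v ih =>
    cases x
    · constructor
      · intro h
        have h' : runST (some false) v ≠ none := by simpa [runST] using h
        have := ih.2 h'
        simp [stF, acc, this]
      · intro h
        exact absurd (by simpa [runST] using runST_none v) h
    · constructor
      · intro h
        have h' : runST (some true) v ≠ none := by simpa [runST] using h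
        have := (ih.1 h').2
        simp [stF, acc, this]
      · intro h
        have h' : runST (some true) v ≠ none := by simpa [runST] using h
        have := (ih.1 h').1
        simp [stF, acc, this]

/-- A canonical preimage under `s = stF true` of an accepted word. -/
def invS : List Bool → List Bool
  | [] => []
  | [false] => [true]
  | false :: true :: v => false :: true :: invS v
  | false :: false :: v => true :: invS (false :: v)
  | true :: v => true :: v
termination_by v => v.length

lemma invS_len : ∀ v : List Bool, (invS v).length = v.length := by
  intro v
  induction v using invS.induct <;> simp_all [invS]

lemma invS_spec : ∀ v : List Bool, acc true v = true →
    stF true (invS v) = v ∧ runST (some true) (invS v) ≠ none := by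
  intro v
  induction v using invS.induct with
  | case1 => intro _; simp [invS, stF, runST]
  | case2 =>
    intro _
    refine ⟨by simp [invS, stF], by simp [invS, runST]⟩
  | case3 v ih =>
    intro h
    have h' : acc true v = true := by simpa [acc] using h
    obtain ⟨h1, h2⟩ := ih h'
    refine ⟨by simp [invS, stF, h1], by simpa [invS, runST] using h2⟩
  | case4 v ih =>
    intro h
    have h' : acc true (false :: v) = true := by simpa [acc] using h
    obtain ⟨h1, h2⟩ := ih h'
    refine ⟨by simp [invS, stF, h1], by simpa [invS, runST] using h2⟩
  | case5 v =>
    intro h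
    simp [acc] at h

lemma activity_set_eq (n : ℕ) :
    {v : List Bool | v.length = n ∧
        ∃ u : List Bool, u.length = n ∧ sec (stF true) u ≠ id ∧ stF true u = v} =
      {v : List Bool | v.length = n ∧ acc true v = true} := by
  ext v
  simp only [Set.mem_setOf_eq]
  constructor
  · rintro ⟨hv, u, hu, hsec, huv⟩
    refine ⟨hv, ?_⟩
    have hr := (sec_ne_id_iff u).1 hsec
    have := ((acc_sound u).1 hr).1
    rwa [huv] at this
  · rintro ⟨hv, hacc⟩
    obtain ⟨h1, h2⟩ := invS_spec v hacc
    exact ⟨hv, invS v, by rw [invS_len, hv], (sec_ne_id_iff _).2 h2, h1⟩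

/-- Finsets counting the accepted words of each length (from states `A` and `B`). -/
def WAB : ℕ → Finset (List Bool) × Finset (List Bool)
  | 0 => ({[]}, {[]})
  | n + 1 =>
      (((WAB n).2).image (false :: ·),
        ((WAB n).2).image (false :: ·) ∪ ((WAB n).1).image (true :: ·))

lemma WAB_mem : ∀ (n : ℕ) (v : List Bool),
    (v ∈ (WAB n).1 ↔ v.length = n ∧ acc true v = true) ∧
    (v ∈ (WAB n).2 ↔ v.length = n ∧ acc false v = true) := by
  intro n
  induction n with
  | zero =>
    intro v
    cases v with
    | nil => simp [WAB, acc]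
    | cons b w => simp [WAB, acc]
  | succ n ih =>
    intro v
    cases v with
    | nil => simp [WAB]
    | cons b w =>
      cases b
      · constructor
        · simp only [WAB, Finset.mem_image, Finset.mem_union]
          constructor
          · rintro ⟨x, hx, hxe⟩
            obtain rfl : x = w := by simpa using hxe
            have := ((ih x).2).1 hx
            simp [acc, this.1, this.2]
          · rintro ⟨hlen, hacc⟩
            exact ⟨w, ((ih w).2).2 ⟨by simpa using hlen, by simpa [acc] using hacc⟩, rfl⟩
        · simp only [WAB, Finset.mem_image, Finset.mem_union]
          constructor
          · rintro (⟨x, hx, hxe⟩ | ⟨x, hx, hxe⟩)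
            · obtain rfl : x = w := by simpa using hxe
              have := ((ih x).2).1 hx
              simp [acc, this.1, this.2]
            · exact absurd hxe (by simp)
          · rintro ⟨hlen, hacc⟩
            exact Or.inl ⟨w, ((ih w).2).2 ⟨by simpa using hlen,
              by simpa [acc] using hacc⟩, rfl⟩
      · constructor
        · simp only [WAB, Finset.mem_image, Finset.mem_union]
          constructor
          · rintro ⟨x, hx, hxe⟩
            exact absurd hxe (by simp)
          · rintro ⟨hlen, hacc⟩
            simp [acc] at hacc
        · simp only [WAB, Finset.mem_image, Finset.mem_union]
          constructor
          · rintro (⟨x, hx, hxe⟩ | ⟨x, hx, hxe⟩)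
            · exact absurd hxe (by simp)
            · obtain rfl : x = w := by simpa using hxe
              have := ((ih x).1).1 hx
              simp [acc, this.1, this.2]
          · rintro ⟨hlen, hacc⟩
            exact Or.inr ⟨w, ((ih w).1).2 ⟨by simpa using hlen,
              by simpa [acc] using hacc⟩, rfl⟩

lemma cons_injective (b : Bool) : Function.Injective (b :: · : List Bool → List Bool) := by
  intro x y h; injection h

lemma WAB_card : ∀ n : ℕ,
    (WAB n).1.card = Nat.fib (n + 1) ∧ (WAB n).2.card = Nat.fib (n + 2) := by
  intro n
  induction n with
  | zero => simp [WAB]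
  | succ n ih =>
    have hdisj : Disjoint (((WAB n).2).image (false :: ·))
        (((WAB n).1).image (true :: ·)) := by
      rw [Finset.disjoint_left]
      rintro a ha hb
      simp only [Finset.mem_image] at ha hb
      obtain ⟨x, _, rfl⟩ := ha
      obtain ⟨y, _, h⟩ := hb
      simp at h
    constructor
    · show (((WAB n).2).image (false :: ·)).card = _
      rw [Finset.card_image_of_injective _ (cons_injective false), ih.2]
    · show ((((WAB n).2).image (false :: ·)) ∪ (((WAB n).1).image (true :: ·))).card = _
      rw [Finset.card_union_of_disjoint hdisj,
        Finset.card_image_of_injective _ (cons_injective false),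
        Finset.card_image_of_injective _ (cons_injective true), ih.1, ih.2]
      rw [show n + 1 + 2 = n + 3 by omega]
      have h : Nat.fib (n + 3) = Nat.fib (n + 1) + Nat.fib (n + 2) := by
        rw [show n + 3 = n + 1 + 2 by omega]
        rw [show n + 1 + 2 = n + 1 + 2 from rfl, Nat.fib_add_two]
      omega

lemma activity_stF_eq (n : ℕ) : activity (stF true) n = Nat.fib (n + 1) := by
  have hset : {v : List Bool | v.length = n ∧
      ∃ u : List Bool, u.length = n ∧ sec (stF true) u ≠ id ∧ stF true u = v} =
      ↑((WAB n).1) := by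
    rw [activity_set_eq n]
    ext v
    simp only [Set.mem_setOf_eq, Finset.coe_sort_coe, Finset.mem_coe]
    exact ((WAB_mem n v).1).symm
  rw [activity, hset, Set.ncard_coe_finset, (WAB_card n).1]

/-! ### The golden-ratio limit -/

private noncomputable def gold : ℝ := (1 + Real.sqrt 5) / 2

private lemma gold_facts : 1 ≤ gold ∧ gold ≤ 2 ∧ gold ^ 2 = gold + 1 := by
  have h5 : Real.sqrt 5 ^ 2 = 5 := Real.sq_sqrt (by norm_num)
  have hnn : 0 ≤ Real.sqrt 5 := Real.sqrt_nonneg 5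
  refine ⟨?_, ?_, ?_⟩
  · unfold gold; nlinarith
  · unfold gold; nlinarith
  · unfold gold; nlinarith

private lemma gold_pos : 0 < gold := lt_of_lt_of_le one_pos gold_facts.1

private lemma fib_bounds : ∀ n : ℕ,
    (gold ^ n ≤ (Nat.fib (n + 2) : ℝ) ∧ (Nat.fib (n + 1) : ℝ) ≤ gold ^ n) ∧
    (gold ^ (n + 1) ≤ (Nat.fib (n + 3) : ℝ) ∧ (Nat.fib (n + 2) : ℝ) ≤ gold ^ (n + 1)) := by
  intro n
  induction n with
  | zero =>
    have h1 := gold_facts.1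
    have h2 := gold_facts.2.1
    refine ⟨⟨?_, ?_⟩, ?_, ?_⟩ <;>
      simp [Nat.fib] <;> linarith
  | succ n ih =>
    obtain ⟨⟨hl0, hu0⟩, ⟨hl1, hu1⟩⟩ := ih
    refine ⟨⟨hl1, hu1⟩, ?_, ?_⟩
    · have he : gold ^ (n + 2) = gold ^ (n + 1) + gold ^ n := by
        have := gold_facts.2.2
        calc gold ^ (n + 2) = gold ^ n * gold ^ 2 := by ring
        _ = gold ^ n * (gold + 1) := by rw [this]
        _ = gold ^ (n + 1) + gold ^ n := by ring
      have hf : (Nat.fib (n + 4) : ℝ) = Nat.fib (n + 2) + Nat.fib (n + 3) := by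
        have : Nat.fib (n + 4) = Nat.fib (n + 2) + Nat.fib (n + 3) := Nat.fib_add_two
        exact_mod_cast this
      rw [he, hf]
      linarith
    · have he : gold ^ (n + 2) = gold ^ (n + 1) + gold ^ n := by
        have := gold_facts.2.2
        calc gold ^ (n + 2) = gold ^ n * gold ^ 2 := by ring
        _ = gold ^ n * (gold + 1) := by rw [this]
        _ = gold ^ (n + 1) + gold ^ n := by ring
      have hf : (Nat.fib (n + 3) : ℝ) = Nat.fib (n + 1) + Nat.fib (n + 2) := by
        have : Nat.fib (n + 3) = Nat.fib (n + 1) + Nat.fib (n + 2) := Nat.fib_add_two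
        exact_mod_cast this
      rw [he, hf]
      linarith

private lemma fib_log_limit :
    Tendsto (fun n : ℕ => Real.log (Nat.fib (n + 1)) / (n : ℝ)) atTop
      (𝓝 (Real.log gold)) := by
  set L := Real.log gold with hL
  have hL0 : 0 ≤ L := Real.log_nonneg gold_facts.1
  have hlow : Tendsto (fun n : ℕ => (1 - 1 / (n : ℝ)) * L) atTop (𝓝 L) := by
    have h1 : Tendsto (fun n : ℕ => 1 - 1 / (n : ℝ)) atTop (𝓝 1) := by
      simpa using tendsto_const_nhds.sub (tendsto_one_div_atTop_nhds_zero_nat (𝕜 := ℝ))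
    simpa using h1.mul_const L
  refine tendsto_of_tendsto_of_tendsto_of_le_of_le' hlow tendsto_const_nhds ?_ ?_
  · filter_upwards [eventually_ge_atTop 1] with n hn
    obtain ⟨m, rfl⟩ := Nat.exists_eq_add_of_le hn
    have hnpos : (0 : ℝ) < (1 + m : ℕ) := by positivity
    have hfib : gold ^ m ≤ (Nat.fib (m + 2) : ℝ) := (fib_bounds m).1.1
    have hlog : (m : ℝ) * L ≤ Real.log (Nat.fib (m + 2)) := by
      have := Real.log_le_log (pow_pos gold_pos m) hfib
      rwa [Real.log_pow] at this
    rw [le_div_iff₀ hnpos]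
    have hcast : ((1 + m : ℕ) : ℝ) = (m : ℝ) + 1 := by push_cast; ring
    have heq : (1 - 1 / ((1 + m : ℕ) : ℝ)) * L * ((1 + m : ℕ) : ℝ) = (m : ℝ) * L := by
      rw [hcast]
      have hne : (m : ℝ) + 1 ≠ 0 := by positivity
      field_simp
      ring
    rw [heq]
    have : (1 + m) + 1 = m + 2 := by omega
    rw [this]
    exact hlog
  · filter_upwards [eventually_ge_atTop 1] with n hn
    have hnpos : (0 : ℝ) < n := by exact_mod_cast hn
    rw [div_le_iff₀ hnpos]
    have hfib : (Nat.fib (n + 1) : ℝ) ≤ gold ^ n := by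
      rcases n with _ | m
      · omega
      · exact (fib_bounds m).2.2
    have hfibpos : (0 : ℝ) < (Nat.fib (n + 1) : ℝ) := by
      have : 0 < Nat.fib (n + 1) := Nat.fib_pos.2 (by omega)
      exact_mod_cast this
    have := Real.log_le_log hfibpos hfib
    rwa [Real.log_pow, mul_comm] at this

/-- Fibonacci activity: `α_s(1) = 1`, `α_s(2) = 2`,
`α_s(n+2) = α_s(n+1) + α_s(n)` for `n ≥ 1`, and consequently
`(log α_s(n))/n → log((1+√5)/2)`, the logarithm of the golden ratio. -/
theorem fibonacci_activity :
    activity (stF true) 1 = 1 ∧ activity (stF true) 2 = 2 ∧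
    (∀ n : ℕ, 1 ≤ n →
      activity (stF true) (n + 2) =
        activity (stF true) (n + 1) + activity (stF true) n) ∧
    Tendsto (fun n : ℕ => Real.log (activity (stF true) n) / (n : ℝ)) atTop
      (𝓝 (Real.log ((1 + Real.sqrt 5) / 2))) := by
  refine ⟨?_, ?_, ?_, ?_⟩
  · rw [activity_stF_eq]; rfl
  · rw [activity_stF_eq]; rfl
  · intro n _
    rw [activity_stF_eq, activity_stF_eq, activity_stF_eq]
    rw [show n + 2 + 1 = n + 1 + 2 by omega, Nat.fib_add_two,
      show n + 1 + 1 = n + 2 by omega]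
    omega
  · have := fib_log_limit
    simp only [activity_stF_eq]
    exact this

end AutHier
end

section
/- Over Σ = {1,2}, the endomorphism t_0 defined by t_0(1u) = 2u and t_0(2u) = 2·t_0(u) for all u ∈ Σ* generates a free monogenic semigroup: for all integers m, n ≥ 1 with m ≠ n, t_0^m ≠ t_0^n. -/
open Filter Topology

namespace AutHier

variable {A : Type*}

/-- The transformation `t_0` over `Σ = {1,2}` (encoded as `Bool`, `false ↦ 1`,
`true ↦ 2`): `t_0(1u) = 2u` and `t_0(2u) = 2·t_0(u)`. -/
def tzero : List Bool → List Bool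
  | [] => []
  | false :: u => true :: u
  | true :: u => true :: tzero u

theorem tzero_iterate_true_cons (k : ℕ) (u : List Bool) :
    tzero^[k] (true :: u) = true :: tzero^[k] u := by
  induction k generalizing u with
  | zero => rfl
  | succ k ih => exact ih (tzero u)

theorem tzero_iterate_replicate_false (k j : ℕ) :
    tzero^[k] (List.replicate (k + j) false) =
      List.replicate k true ++ List.replicate j false := by
  induction k with
  | zero => simp
  | succ k ih =>
    rw [Nat.add_right_comm, Function.iterate_succ_apply]
    change tzero^[k] (true :: List.replicate (k + j) false) = _
    rw [tzero_iterate_true_cons, ih]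
    rfl

/-- `t_0` generates a free monogenic semigroup: distinct positive powers of `t_0`
are distinct. -/
theorem tzero_free : ∀ m n : ℕ, 1 ≤ m → 1 ≤ n → m ≠ n → tzero^[m] ≠ tzero^[n] := by
  intro m n _ _ hmn h
  have hw := congrFun h (List.replicate (m + n) false)
  rw [tzero_iterate_replicate_false, add_comm m n, tzero_iterate_replicate_false] at hw
  apply hmn
  simpa [List.count_replicate] using congrArg (List.count true) hw

end AutHier
end

section
/- Over Σ = {1,2,3}, define the finite-state endomorphisms a and b by a(1u) = 1u, a(2u) = 1u, a(3u) = 2·a(u), and b(1u) = 2·a(u), b(2u) = 3u, b(3u) = 1·b(u), for all u ∈ Σ*. Then b has index 8 and period 3: b^8 = b^{11}; the least p ≥ 1 such that b^i = b^{i+p} for some i ≥ 1 is p = 3; and the least i ≥ 1 with b^i = b^{i+3} is i = 8. -/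
open Filter Topology

namespace AutHier

variable {A : Type*}

/-- The transformation `a` over `Σ = {1,2,3}` (encoded as `Fin 3`, `0 ↦ 1`, `1 ↦ 2`,
`2 ↦ 3`): `a(1u) = 1u`, `a(2u) = 1u`, `a(3u) = 2·a(u)`. -/
def aF : List (Fin 3) → List (Fin 3)
  | [] => []
  | ⟨0, _⟩ :: u => 0 :: u
  | ⟨1, _⟩ :: u => 0 :: u
  | ⟨_ + 2, _⟩ :: u => 1 :: aF u

/-- The transformation `b` over `Σ = {1,2,3}` (encoded as `Fin 3`):
`b(1u) = 2·a(u)`, `b(2u) = 3u`, `b(3u) = 1·b(u)`. -/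
def bF : List (Fin 3) → List (Fin 3)
  | [] => []
  | ⟨0, _⟩ :: u => 1 :: aF u
  | ⟨1, _⟩ :: u => 2 :: u
  | ⟨_ + 2, _⟩ :: u => 0 :: bF u

/-!
Write `φ = b ∘ a` (first `a`, then `b`). Since `a` sends every word to one starting with `1`
or `2` and `a(1u) = a(2u) = 1u`, we have `a³ = a²`, and `φ(xu) = y·a(u)` with `y` depending
only on `x`, whence `φ³ = φ²`. After two steps `b³` acts on the tail of a word as `φ`
(up to a conjugation by `a`), so `b^{3n+2}` is governed by `φⁿ` and `b⁸ = b¹¹`.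
On first letters `b` is the cyclic shift `1 → 2 → 3 → 1`, which forces every period to be
a multiple of `3`, and the word `232` (encoded `[1, 2, 1]`) separates `b⁷` from `b¹⁰`.
-/

theorem _root_.Function.iterate_eq_iterate_add_of_le {α : Type*} {f : α → α} {i j p : ℕ}
    (h : f^[i] = f^[i + p]) (hij : i ≤ j) : f^[j] = f^[j + p] := by
  obtain ⟨k, rfl⟩ := Nat.exists_eq_add_of_le hij
  rw [add_right_comm, Function.iterate_add, Function.iterate_add f (i + p), ← h]

lemma aF_aF_aF (u : List (Fin 3)) : aF (aF (aF u)) = aF (aF u) := by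
  rcases u with _ | ⟨⟨_ | _ | _ | _, hx⟩, v⟩
  · rfl
  · rfl
  · rfl
  · rfl
  · omega

lemma iterate_bF_comp_aF_three : (bF ∘ aF)^[3] = (bF ∘ aF)^[2] := by
  funext u
  rcases u with _ | ⟨⟨_ | _ | _ | _, hx⟩, v⟩
  · rfl
  · exact congrArg (List.cons 1) (aF_aF_aF v)
  · exact congrArg (List.cons 1) (aF_aF_aF v)
  · exact congrArg (List.cons 2) (aF_aF_aF v)
  · omega

lemma bF_iterate_three_mul_add_two_cons (n : ℕ) (v : List (Fin 3)) :
    bF^[3 * n + 2] (0 :: v) = 2 :: aF ((bF ∘ aF)^[n] v) ∧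
    bF^[3 * n + 2] (1 :: v) = 0 :: (bF ∘ aF)^[n] (bF v) ∧
    bF^[3 * n + 2] (2 :: v) = 1 :: aF ((bF ∘ aF)^[n] (bF v)) := by
  induction n with
  | zero => exact ⟨rfl, rfl, rfl⟩
  | succ n ih =>
    obtain ⟨h0, h1, h2⟩ := ih
    simp only [show 3 * (n + 1) + 2 = 3 + (3 * n + 2) by ring, Function.iterate_add_apply, h0, h1,
      h2, Function.iterate_succ_apply']
    exact ⟨rfl, rfl, rfl⟩

lemma bF_iterate_eight_eq_eleven : bF^[8] = bF^[11] := by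
  funext u
  rcases u with _ | ⟨x, v⟩
  · exact (Function.iterate_fixed rfl 8).trans (Function.iterate_fixed rfl 11).symm
  · obtain ⟨h0, h1, h2⟩ := bF_iterate_three_mul_add_two_cons 2 v
    obtain ⟨h0', h1', h2'⟩ := bF_iterate_three_mul_add_two_cons 3 v
    rw [iterate_bF_comp_aF_three] at h0' h1' h2'
    fin_cases x
    exacts [h0.trans h0'.symm, h1.trans h1'.symm, h2.trans h2'.symm]

lemma bF_singleton (x : Fin 3) : bF [x] = [x + 1] := by
  fin_cases x <;> rfl

open Fin.NatCast in
lemma bF_iterate_singleton (n : ℕ) (x : Fin 3) : bF^[n] [x] = [x + (n : Fin 3)] := by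
  induction n with
  | zero => simp
  | succ n ih => rw [Function.iterate_succ_apply', ih, bF_singleton, Nat.cast_succ, add_assoc]

open Fin.NatCast in
lemma three_dvd_of_bF_iterate_eq {i p : ℕ} (h : bF^[i] = bF^[i + p]) : 3 ∣ p := by
  have hx := congrFun h [0]
  rw [bF_iterate_singleton, bF_iterate_singleton, List.singleton_inj, zero_add, zero_add,
    Nat.cast_add, left_eq_add] at hx
  exact Fin.natCast_eq_zero.mp hx

lemma bF_iterate_seven_ne_ten : bF^[7] ≠ bF^[10] :=
  fun h => absurd (congrFun h [1, 2, 1]) (by decide)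

/-- `b` has index `8` and period `3`: `b^8 = b^{11}`, the least `p ≥ 1` with
`b^i = b^{i+p}` for some `i ≥ 1` is `3`, and the least `i ≥ 1` with `b^i = b^{i+3}`
is `8`. -/
theorem bF_index_period :
    bF^[8] = bF^[11] ∧
    IsLeast {p : ℕ | 1 ≤ p ∧ ∃ i : ℕ, 1 ≤ i ∧ bF^[i] = bF^[i + p]} 3 ∧
    IsLeast {i : ℕ | 1 ≤ i ∧ bF^[i] = bF^[i + 3]} 8 := by
  have h811 := bF_iterate_eight_eq_eleven
  refine ⟨h811, ⟨⟨by norm_num, 8, by norm_num, h811⟩, ?_⟩, ⟨⟨by norm_num, h811⟩, ?_⟩⟩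
  · rintro p ⟨hp, i, -, h⟩
    exact Nat.le_of_dvd hp (three_dvd_of_bF_iterate_eq h)
  · rintro i ⟨-, h⟩
    by_contra! hi
    exact bF_iterate_seven_ne_ten (Function.iterate_eq_iterate_add_of_le h (by omega))

end AutHier
end

section
/- The activity hierarchy is strict: assume #Σ ≥ 2. For all integers d₁, d₂ with −1 < d₁ < d₂ and all reals λ₁, λ₂ with 0 < λ₁ < λ₂ < log #Σ, the following strict inclusions hold among subsets of FEnd(Σ*): SP(−1) ⊊ SP(d₁) ⊊ SP(d₂) ⊊ SE(0) ⊊ SE(λ₁) ⊊ SE(λ₂) ⊊ SE(log #Σ). -/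
open Filter Topology

namespace AutHier

variable {A : Type*}

/-! ## The flip-after-death endomorphism of a prefix-closed language -/

noncomputable def nu (a b : A) : A → A := fun x => @ite _ (x = a) (Classical.dec _) b a

lemma nu_ne {a b : A} (hab : a ≠ b) (x : A) : nu a b x ≠ x := by
  unfold nu; split
  · rename_i h; rw [h]; exact hab.symm
  · rename_i h; exact fun hh => h hh.symm

noncomputable def dl (L : List A → Prop) (w : List A) : ℕ := sInf {ℓ | ¬ L (w.take ℓ)}

noncomputable def FF (a b : A) (L : List A → Prop) (w : List A) : List A :=
  @ite _ (L w) (Classical.dec _) w (w.set (dl L w - 1) (nu a b (w.getD (dl L w - 1) a)))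

structure Good (L : List A → Prop) : Prop where
  nil : L []
  pref : ∀ u v, L (u ++ v) → L u
  kill : ∀ u, L u → ∃ v, ¬ L (u ++ v)

lemma Good.take {L : List A → Prop} (hL : Good L) {w : List A} (h : L w) (ℓ : ℕ) :
    L (w.take ℓ) := hL.pref _ (w.drop ℓ) (by rw [List.take_append_drop]; exact h)

lemma mem_dlset {L : List A → Prop} {w : List A} {ℓ : ℕ} (h : ¬ L (w.take ℓ)) :
    ℓ ∈ {ℓ | ¬ L (w.take ℓ)} := h

lemma dl_spec {L : List A → Prop} {w : List A} (hw : ¬ L w) : ¬ L (w.take (dl L w)) :=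
  Nat.sInf_mem ⟨w.length, mem_dlset (by simpa [List.take_length] using hw)⟩

lemma dl_le {L : List A → Prop} {w : List A} (hw : ¬ L w) : dl L w ≤ w.length :=
  Nat.sInf_le (mem_dlset (by simpa [List.take_length] using hw))

lemma dl_min {L : List A → Prop} {w : List A} {ℓ : ℕ} (h : ℓ < dl L w) : L (w.take ℓ) := by
  by_contra hc
  have h2 : dl L w ≤ ℓ := Nat.sInf_le (mem_dlset hc)
  omega

lemma dl_pos {L : List A → Prop} (hL : Good L) {w : List A} (hw : ¬ L w) : 1 ≤ dl L w := by
  rcases Nat.eq_zero_or_pos (dl L w) with h | h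
  · exact absurd (by simpa [h] using dl_spec hw) (by simp [hL.nil])
  · exact h

lemma dl_append {L : List A → Prop} (hL : Good L) {u : List A} (v : List A) (hu : ¬ L u) :
    dl L (u ++ v) = dl L u := by
  have huv : ¬ L (u ++ v) := fun h => hu (hL.pref u v h)
  have h1 : dl L (u ++ v) ≤ dl L u := by
    apply Nat.sInf_le
    apply mem_dlset
    rw [List.take_append_of_le_length (dl_le hu)]
    exact dl_spec hu
  apply le_antisymm h1
  apply Nat.sInf_le
  apply mem_dlset
  have h2 : dl L (u ++ v) ≤ u.length := h1.trans (dl_le hu)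
  have := dl_spec huv
  rwa [List.take_append_of_le_length h2] at this

lemma dl_append_alive {L : List A → Prop} (hL : Good L) {u v : List A}
    (hu : L u) (huv : ¬ L (u ++ v)) :
    dl L (u ++ v) = u.length + dl (fun v' => L (u ++ v')) v := by
  set D := dl L (u ++ v) with hD
  have hgt : u.length < D := by
    rcases Nat.lt_or_ge u.length D with h | h
    · exact h
    · exact absurd (by rw [List.take_append_of_le_length h]; exact hL.take hu _) (dl_spec huv)
  set d := dl (fun v' => L (u ++ v')) v with hd
  have hvdead : ¬ (fun v' => L (u ++ v')) v := huv
  have hle : D ≤ u.length + d := by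
    refine Nat.sInf_le (mem_dlset (L := L) (w := u ++ v) ?_)
    rw [List.take_length_add_append]
    exact dl_spec (L := fun v' => L (u ++ v')) (w := v) hvdead
  have hge : d ≤ D - u.length := by
    refine Nat.sInf_le (mem_dlset (L := fun v' => L (u ++ v')) (w := v) ?_)
    show ¬ L (u ++ v.take (D - u.length))
    rw [← List.take_length_add_append (l₁ := u) (l₂ := v) (D - u.length)]
    have : u.length + (D - u.length) = D := by omega
    rw [this]
    exact dl_spec huv
  omega

lemma FF_alive {a b : A} {L : List A → Prop} {w : List A} (h : L w) : FF a b L w = w := by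
  unfold FF; rw [if_pos h]

lemma FF_dead {a b : A} {L : List A → Prop} {w : List A} (h : ¬ L w) :
    FF a b L w = w.set (dl L w - 1) (nu a b (w.getD (dl L w - 1) a)) := by
  unfold FF; rw [if_neg h]

lemma length_FF (a b : A) (L : List A → Prop) (w : List A) :
    (FF a b L w).length = w.length := by
  unfold FF; split <;> simp [List.length_set]

/-- If `u` is dead then `FF` acts on `u ++ v` by modifying `u` only. -/
lemma FF_append_dead {a b : A} {L : List A → Prop} (hL : Good L) {u : List A} (v : List A)
    (hu : ¬ L u) : FF a b L (u ++ v) = FF a b L u ++ v := by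
  have huv : ¬ L (u ++ v) := fun h => hu (hL.pref u v h)
  have hdl : dl L (u ++ v) = dl L u := dl_append hL v hu
  have h1 : 1 ≤ dl L u := dl_pos hL hu
  have h2 : dl L u ≤ u.length := dl_le hu
  rw [FF_dead huv, FF_dead hu, hdl, List.set_append, if_pos (by omega),
    List.getD_append u v a _ (by omega)]

lemma sec_FF_dead {a b : A} {L : List A → Prop} (hL : Good L) {u : List A}
    (hu : ¬ L u) : sec (FF a b L) u = id := by
  funext v
  show (FF a b L (u ++ v)).drop u.length = v
  rw [FF_append_dead hL v hu]
  have : u.length = (FF a b L u).length := (length_FF a b L u).symm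
  rw [this, List.drop_left]

lemma sec_FF_alive {a b : A} {L : List A → Prop} (hL : Good L) {u : List A}
    (hu : L u) : sec (FF a b L) u = FF a b (fun v => L (u ++ v)) := by
  funext v
  show (FF a b L (u ++ v)).drop u.length = FF a b (fun v => L (u ++ v)) v
  by_cases huv : L (u ++ v)
  · rw [FF_alive huv, FF_alive (L := fun v => L (u ++ v)) huv]
    simpa using List.drop_left u v
  · have hvd : ¬ (fun v' => L (u ++ v')) v := huv
    have hDl := dl_append_alive hL hu huv
    set d := dl (fun v' => L (u ++ v')) v with hd
    have hd1 : 1 ≤ d := dl_pos (L := fun v' => L (u ++ v')) ?good hvd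
    case good =>
      constructor
      · simpa using hu
      · intro x y h; rw [← List.append_assoc] at h; exact hL.pref _ _ h
      · intro x hx; rcases hL.kill (u ++ x) hx with ⟨y, hy⟩
        exact ⟨y, by rwa [List.append_assoc] at hy⟩
    have hdlen : d ≤ v.length := dl_le hvd
    rw [FF_dead huv, FF_dead (L := fun v' => L (u ++ v')) hvd, hDl]
    have hpos : u.length + d - 1 = u.length + (d - 1) := by omega
    rw [hpos, List.set_append, if_neg (by omega),
      List.getD_append_right u v a _ (by omega)]
    have : u.length + (d - 1) - u.length = d - 1 := by omega
    rw [this]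
    exact List.drop_left

/-- The sub-language at an alive word is again good. -/
lemma Good.sub {L : List A → Prop} (hL : Good L) {u : List A} (hu : L u) :
    Good (fun v => L (u ++ v)) := by
  constructor
  · simpa using hu
  · intro x y h; rw [← List.append_assoc] at h; exact hL.pref _ _ h
  · intro x hx; rcases hL.kill (u ++ x) hx with ⟨y, hy⟩
    exact ⟨y, by rwa [List.append_assoc] at hy⟩

lemma isEnd_FF {a b : A} {L : List A → Prop} (hL : Good L) : IsEnd (FF a b L) := by
  constructor
  · exact length_FF a b L
  · intro u v
    by_cases huv : L (u ++ v)
    · rw [FF_alive huv, FF_alive (hL.pref u v huv)]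
      exact ⟨v, rfl⟩
    · by_cases hu : L u
      · rw [FF_alive hu, FF_dead huv, dl_append_alive hL hu huv]
        have hd1 : 1 ≤ dl (fun v' => L (u ++ v')) v := dl_pos (hL.sub hu) huv
        rw [show u.length + dl (fun v' => L (u ++ v')) v - 1
            = u.length + (dl (fun v' => L (u ++ v')) v - 1) by omega,
          List.set_append, if_neg (by omega)]
        exact ⟨_, rfl⟩
      · rw [FF_append_dead hL v hu]
        exact ⟨v, rfl⟩

lemma FF_ne_id {a b : A} (hab : a ≠ b) {L : List A → Prop} (hL : Good L) :
    FF a b L ≠ id := by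
  rcases hL.kill [] hL.nil with ⟨v, hv⟩
  simp only [List.nil_append] at hv
  intro h
  have hfv : FF a b L v = v := congrFun h v
  rw [FF_dead hv] at hfv
  have h1 : 1 ≤ dl L v := dl_pos hL hv
  have h2 : dl L v ≤ v.length := dl_le hv
  have hlt : dl L v - 1 < v.length := by omega
  have := congrArg (fun w => w.getD (dl L v - 1) a) hfv
  rw [List.getD_eq_getElem _ _ (by simpa [List.length_set] using hlt),
    List.getElem_set_self, List.getD_eq_getElem _ _ hlt] at this
  exact nu_ne hab _ this

lemma sections_FF {a b : A} {L : List A → Prop} (hL : Good L)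
    (hfin : {L' : List A → Prop | ∃ u, L u ∧ L' = fun v => L (u ++ v)}.Finite) :
    {g | ∃ u, g = sec (FF a b L) u}.Finite := by
  apply Set.Finite.subset (Set.Finite.insert id (hfin.image (FF a b)))
  rintro g ⟨u, rfl⟩
  by_cases hu : L u
  · right; exact ⟨fun v => L (u ++ v), ⟨u, hu, rfl⟩, (sec_FF_alive hL hu).symm⟩
  · left; exact sec_FF_dead hL hu

lemma isFEnd_FF {a b : A} {L : List A → Prop} (hL : Good L)
    (hfin : {L' : List A → Prop | ∃ u, L u ∧ L' = fun v => L (u ++ v)}.Finite) :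
    IsFEnd (FF a b L) := ⟨isEnd_FF hL, sections_FF hL hfin⟩

lemma activity_FF {a b : A} (hab : a ≠ b) {L : List A → Prop} (hL : Good L) (n : ℕ) :
    activity (FF a b L) n = {v : List A | v.length = n ∧ L v}.ncard := by
  unfold activity
  congr 1
  ext v
  constructor
  · rintro ⟨hlen, u, hul, hsec, rfl⟩
    have hu : L u := by
      by_contra hu
      exact hsec (sec_FF_dead hL hu)
    rw [FF_alive hu]
    exact ⟨hul, hu⟩
  · rintro ⟨hlen, hv⟩
    refine ⟨hlen, v, hlen, ?_, FF_alive hv⟩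
    rw [sec_FF_alive hL hv]
    exact FF_ne_id hab (hL.sub hv)

/-! ## Position-wise languages -/

def aliveP (a : A) (C : ℕ → Set A) : List A → Prop :=
  fun w => ∀ i, i < w.length → w.getD i a ∈ C i

lemma aliveP_append {a : A} {C : ℕ → Set A} (u v : List A) :
    aliveP a C (u ++ v) ↔ aliveP a C u ∧ aliveP a (fun i => C (u.length + i)) v := by
  constructor
  · intro h
    constructor
    · intro i hi
      have := h i (by simp; omega)
      rwa [List.getD_append u v a i hi] at this
    · intro i hi
      have := h (u.length + i) (by simp; omega)
      rwa [List.getD_append_right u v a _ (by omega), Nat.add_sub_cancel_left] at this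
  · rintro ⟨h1, h2⟩ i hi
    simp only [List.length_append] at hi
    by_cases hiu : i < u.length
    · rw [List.getD_append u v a i hiu]
      exact h1 i hiu
    · rw [List.getD_append_right u v a _ (by omega)]
      have h3 : v.getD (i - u.length) a ∈ C (u.length + (i - u.length)) := h2 (i - u.length) (by omega)
      rwa [show u.length + (i - u.length) = i by omega] at h3

lemma good_aliveP (a : A) {C : ℕ → Set A} (hkill : ∀ N, ∃ p, N ≤ p ∧ ∃ x, x ∉ C p) :
    Good (aliveP a C) := by
  refine ⟨?_, ?_, ?_⟩
  · intro i hi; simp at hi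
  · intro u v h; exact ((aliveP_append u v).1 h).1
  · intro u _
    obtain ⟨p, hp, x, hx⟩ := hkill u.length
    refine ⟨List.replicate (p - u.length) a ++ [x], fun h => hx ?_⟩
    have hgd : (u ++ (List.replicate (p - u.length) a ++ [x])).getD p a = x := by
      rw [← List.append_assoc]
      have hlen : (u ++ List.replicate (p - u.length) a).length = p := by simp; omega
      rw [List.getD_append_right _ [x] a p (by omega), hlen]
      simp
    have := h p (by simp; omega)
    rwa [hgd] at this

lemma nerode_aliveP (a : A) {C : ℕ → Set A} {m : ℕ} (hm : 0 < m)
    (hper : ∀ i, C (i + m) = C i) :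
    {L' : List A → Prop | ∃ u, aliveP a C u ∧ L' = fun v => aliveP a C (u ++ v)}.Finite := by
  have hshift : ∀ q x, C (x + m * q) = C x := by
    intro q
    induction q with
    | zero => simp
    | succ q ih =>
      intro x
      rw [show x + m * (q + 1) = (x + m * q) + m by ring, hper, ih]
  apply Set.Finite.subset ((Set.finite_Iio m).image
    (fun r => fun v => aliveP a (fun i => C (r + i)) v))
  rintro L' ⟨u, hu, rfl⟩
  refine ⟨u.length % m, Nat.mod_lt _ hm, ?_⟩
  have hC : (fun i => C (u.length % m + i)) = (fun i => C (u.length + i)) := by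
    funext i
    have key : u.length + i = (u.length % m + i) + m * (u.length / m) := by
      conv_lhs => rw [← Nat.mod_add_div u.length m]
      ring
    rw [key, hshift]
  funext v
  apply propext
  show aliveP a (fun i => C (u.length % m + i)) v ↔ aliveP a C (u ++ v)
  rw [hC, aliveP_append]
  exact (and_iff_right hu).symm

lemma count_aliveP [Fintype A] (a : A) (C : ℕ → Set A) (n : ℕ) :
    {w : List A | w.length = n ∧ aliveP a C w}.ncard
      = ∏ i ∈ Finset.range n, (C i).ncard := by
  have himage : {w : List A | w.length = n ∧ aliveP a C w}
      = List.ofFn '' {f : Fin n → A | ∀ i : Fin n, f i ∈ C ↑i} := by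
    ext w
    constructor
    · rintro ⟨hlen, hal⟩
      refine ⟨fun i => w.getD i a, fun i => hal i (by omega), ?_⟩
      apply List.ext_getElem (by simp [hlen])
      intro i h1 h2
      rw [List.getElem_ofFn]
      exact (List.getD_eq_getElem w a h2)
    · rintro ⟨f, hf, rfl⟩
      refine ⟨by simp, ?_⟩
      intro i hi
      simp only [List.length_ofFn] at hi
      rw [List.getD_eq_getElem _ _ (by simpa using hi), List.getElem_ofFn]
      exact hf ⟨i, by simpa using hi⟩
  rw [himage, Set.ncard_image_of_injective _ List.ofFn_injective]
  have h2 : {f : Fin n → A | ∀ i : Fin n, f i ∈ C ↑i}.ncard = ∏ i : Fin n, (C ↑i).ncard := by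
    rw [← Nat.card_coe_set_eq]
    have e : ↥{f : Fin n → A | ∀ i : Fin n, f i ∈ C ↑i} ≃ ((i : Fin n) → ↥(C ↑i)) :=
      Equiv.subtypePiEquivPi
    rw [Nat.card_congr e, Nat.card_pi]
    exact Finset.prod_congr rfl fun i _ => Nat.card_coe_set_eq _
  rw [h2]
  exact Fin.prod_univ_eq_prod_range (fun i => (C i).ncard) n

lemma prod_per (g : ℕ → ℕ) (m : ℕ) (hper : ∀ i, g (i + m) = g i) (q r : ℕ) :
    ∏ i ∈ Finset.range (m * q + r), g i
      = (∏ i ∈ Finset.range m, g i) ^ q * ∏ i ∈ Finset.range r, g i := by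
  induction q with
  | zero => simp
  | succ q ih =>
    rw [show m * (q + 1) + r = m + (m * q + r) by ring, Finset.prod_range_add]
    have hg : ∀ i, g (m + i) = g i := fun i => by rw [Nat.add_comm]; exact hper i
    rw [Finset.prod_congr rfl (fun i _ => hg i), ih]
    ring

lemma prod_bounds (g : ℕ → ℕ) (m k : ℕ) (hm : 0 < m) (h1 : ∀ i, 1 ≤ g i)
    (hk : ∀ i, g i ≤ k) (hper : ∀ i, g (i + m) = g i) (n : ℕ) :
    (∏ i ∈ Finset.range m, g i) ^ (n / m) ≤ ∏ i ∈ Finset.range n, g i ∧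
    ∏ i ∈ Finset.range n, g i ≤ (∏ i ∈ Finset.range m, g i) ^ (n / m) * k ^ m := by
  have hk1 : 1 ≤ k := le_trans (h1 0) (hk 0)
  have hsplit := prod_per g m hper (n / m) (n % m)
  rw [Nat.div_add_mod n m] at hsplit
  constructor
  · rw [hsplit]
    have : 1 ≤ ∏ i ∈ Finset.range (n % m), g i := Finset.one_le_prod' fun i _ => h1 i
    calc (∏ i ∈ Finset.range m, g i) ^ (n / m)
        = (∏ i ∈ Finset.range m, g i) ^ (n / m) * 1 := by ring
      _ ≤ _ := Nat.mul_le_mul_left _ this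
  · rw [hsplit]
    apply Nat.mul_le_mul_left
    calc ∏ i ∈ Finset.range (n % m), g i
        ≤ k ^ (Finset.range (n % m)).card :=
          Finset.prod_le_pow_card _ _ _ fun i _ => hk i
      _ = k ^ (n % m) := by rw [Finset.card_range]
      _ ≤ k ^ m := Nat.pow_le_pow_right hk1 (le_of_lt (Nat.mod_lt _ hm))

/-! ## Letter-counting languages -/

section Cnt

variable [DecidableEq A]

def aliveCnt (a b : A) (e : ℕ) : List A → Prop :=
  fun w => (∀ i, i < w.length → w.getD i a = a ∨ w.getD i a = b) ∧ w.count b ≤ e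

lemma aliveCnt_append {a b : A} {e : ℕ} (u v : List A) :
    aliveCnt a b e (u ++ v) ↔ aliveCnt a b e u ∧ aliveCnt a b (e - u.count b) v := by
  unfold aliveCnt
  rw [List.count_append]
  constructor
  · rintro ⟨hlet, hcnt⟩
    refine ⟨⟨fun i hi => ?_, by omega⟩, ⟨fun i hi => ?_, by omega⟩⟩
    · have := hlet i (by simp; omega)
      rwa [List.getD_append u v a i hi] at this
    · have := hlet (u.length + i) (by simp; omega)
      rwa [List.getD_append_right u v a _ (by omega), Nat.add_sub_cancel_left] at this
  · rintro ⟨⟨hl1, hc1⟩, ⟨hl2, hc2⟩⟩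
    refine ⟨fun i hi => ?_, by omega⟩
    simp only [List.length_append] at hi
    by_cases hiu : i < u.length
    · rw [List.getD_append u v a i hiu]; exact hl1 i hiu
    · rw [List.getD_append_right u v a _ (by omega)]
      exact hl2 (i - u.length) (by omega)

lemma good_aliveCnt (a b : A) (e : ℕ) : Good (aliveCnt a b e) := by
  refine ⟨⟨fun i hi => by simp at hi, by simp⟩, ?_, ?_⟩
  · intro u v h; exact ((aliveCnt_append u v).1 h).1
  · intro u _
    refine ⟨List.replicate (e + 1) b, fun h => ?_⟩
    have := h.2
    rw [List.count_append, List.count_replicate_self] at this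
    omega

lemma nerode_aliveCnt (a b : A) (e : ℕ) :
    {L' : List A → Prop | ∃ u, aliveCnt a b e u ∧
      L' = fun v => aliveCnt a b e (u ++ v)}.Finite := by
  apply Set.Finite.subset ((Set.finite_Iic e).image (fun j => aliveCnt a b j))
  rintro L' ⟨u, hu, rfl⟩
  refine ⟨e - u.count b, by simp, ?_⟩
  funext v
  apply propext
  rw [aliveCnt_append]
  exact (and_iff_right hu).symm

lemma count_eq_card_filter (a b : A) (w : List A) :
    w.count b = ((Finset.range w.length).filter (fun i => w.getD i a = b)).card := by
  induction w using List.reverseRecOn with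
  | nil => simp
  | append_singleton w x ih =>
    have hgd : ∀ i, i < w.length → (w ++ [x]).getD i a = w.getD i a :=
      fun i hi => List.getD_append w [x] a i hi
    have hgdx : (w ++ [x]).getD w.length a = x := by
      rw [List.getD_append_right w [x] a _ (le_refl _), Nat.sub_self]
      simp
    rw [List.count_append, List.length_append]
    simp only [List.length_singleton]
    rw [Finset.range_add_one, Finset.filter_insert]
    have hfc : (Finset.range w.length).filter (fun i => (w ++ [x]).getD i a = b)
        = (Finset.range w.length).filter (fun i => w.getD i a = b) := by
      apply Finset.filter_congr
      intro i hi
      rw [hgd i (Finset.mem_range.1 hi)]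
    by_cases hx : x = b
    · rw [if_pos (by rw [hgdx]; exact hx), Finset.card_insert_of_notMem (by simp), hfc, ← ih]
      simp [hx]
    · rw [if_neg (by rw [hgdx]; exact hx), hfc, ← ih]
      simp [List.count_singleton', hx]

lemma cnt_upper [Fintype A] {a b : A} (hab : a ≠ b) (e n : ℕ) (hn : 1 ≤ n) :
    {w : List A | w.length = n ∧ aliveCnt a b e w}.ncard ≤ (e + 1) * n ^ e := by
  classical
  set t := (Finset.range n).powerset.filter (fun s => s.card ≤ e) with ht
  have h1 : {w : List A | w.length = n ∧ aliveCnt a b e w}.ncard ≤ t.card := by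
    rw [← Set.ncard_coe_finset]
    apply Set.ncard_le_ncard_of_injOn
      (fun w => (Finset.range n).filter (fun i => w.getD i a = b))
    · rintro w ⟨hlen, hl, hc⟩
      simp only [ht, Finset.coe_filter, Finset.mem_powerset, Set.mem_setOf_eq]
      constructor
      · exact Finset.filter_subset _ _
      · rw [← hlen, ← count_eq_card_filter a b w]; exact hc
    · rintro w ⟨hwl, hwa, -⟩ w' ⟨hwl', hwa', -⟩ hff
      apply List.ext_getElem (by omega)
      intro i h1 h2
      have hff2 : (Finset.range n).filter (fun i => w.getD i a = b)
          = (Finset.range n).filter (fun i => w'.getD i a = b) := hff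
      have hin : i < n := by omega
      have hgb : w.getD i a = b ↔ w'.getD i a = b := by
        constructor
        · intro h
          have : i ∈ (Finset.range n).filter (fun i => w'.getD i a = b) := by
            rw [← hff2]; exact Finset.mem_filter.2 ⟨Finset.mem_range.2 hin, h⟩
          exact (Finset.mem_filter.1 this).2
        · intro h
          have : i ∈ (Finset.range n).filter (fun i => w.getD i a = b) := by
            rw [hff2]; exact Finset.mem_filter.2 ⟨Finset.mem_range.2 hin, h⟩
          exact (Finset.mem_filter.1 this).2
      rw [← List.getD_eq_getElem w a h1, ← List.getD_eq_getElem w' a h2]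
      rcases hwa i h1 with h | h <;> rcases hwa' i h2 with h' | h'
      · rw [h, h']
      · exact absurd (h.symm.trans (hgb.2 h')) hab
      · exact absurd (h'.symm.trans (hgb.1 h)) hab
      · rw [h, h']
  have h2 : t.card ≤ ∑ j ∈ Finset.range (e + 1), n.choose j := by
    calc t.card ≤ ((Finset.range (e + 1)).biUnion
        (fun j => (Finset.range n).powersetCard j)).card := by
          apply Finset.card_le_card
          intro s hs
          simp only [ht, Finset.mem_filter, Finset.mem_powerset] at hs
          exact Finset.mem_biUnion.2 ⟨s.card, Finset.mem_range.2 (by omega),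
            Finset.mem_powersetCard.2 ⟨hs.1, rfl⟩⟩
      _ ≤ ∑ j ∈ Finset.range (e + 1), ((Finset.range n).powersetCard j).card :=
          Finset.card_biUnion_le
      _ = ∑ j ∈ Finset.range (e + 1), n.choose j := by
          apply Finset.sum_congr rfl
          intro j _
          rw [Finset.card_powersetCard, Finset.card_range]
  have h3 : ∑ j ∈ Finset.range (e + 1), n.choose j ≤ (e + 1) * n ^ e := by
    calc ∑ j ∈ Finset.range (e + 1), n.choose j
        ≤ ∑ j ∈ Finset.range (e + 1), n ^ e := by
          apply Finset.sum_le_sum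
          intro j hj
          exact le_trans (Nat.choose_le_pow n j)
            (Nat.pow_le_pow_right hn (by simp at hj; omega))
      _ = (e + 1) * n ^ e := by rw [Finset.sum_const, Finset.card_range, smul_eq_mul]
  omega

lemma cnt_lower [Fintype A] {a b : A} (hab : a ≠ b) (e q n : ℕ) (hq : 1 ≤ q)
    (hn : e * q ≤ n) :
    q ^ e ≤ {w : List A | w.length = n ∧ aliveCnt a b e w}.ncard := by
  classical
  set Ψ : (Fin e → Fin q) → List A := fun s =>
    List.ofFn (fun p : Fin n => if ∃ i : Fin e, (p : ℕ) = i * q + (s i : ℕ) then b else a)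
    with hΨ
  have pos_lt : ∀ (s : Fin e → Fin q) (i : Fin e), (i : ℕ) * q + (s i : ℕ) < n := by
    intro s i
    have h1 : (i : ℕ) + 1 ≤ e := i.isLt
    have h2 : ((i : ℕ) + 1) * q ≤ e * q := Nat.mul_le_mul_right q h1
    have h3 : (s i : ℕ) < q := (s i).isLt
    have h4 : ((i : ℕ) + 1) * q = (i : ℕ) * q + q := by ring
    omega
  have hget : ∀ (s : Fin e → Fin q) (p : ℕ) (hp : p < n),
      (Ψ s).getD p a = if ∃ i : Fin e, p = i * q + (s i : ℕ) then b else a := by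
    intro s p hp
    have hlen : p < (Ψ s).length := by simp [hΨ, hp]
    rw [List.getD_eq_getElem _ _ hlen]
    simp [hΨ]
  have hmem : ∀ s, Ψ s ∈ {w : List A | w.length = n ∧ aliveCnt a b e w} := by
    intro s
    refine ⟨by simp [hΨ], ⟨fun i hi => ?_, ?_⟩⟩
    · rw [hget s i (by simpa [hΨ] using hi)]
      split
      · right; rfl
      · left; rfl
    · rw [count_eq_card_filter a b (Ψ s)]
      calc ((Finset.range (Ψ s).length).filter (fun i => (Ψ s).getD i a = b)).card
          ≤ ((Finset.univ : Finset (Fin e)).image (fun i : Fin e => (i : ℕ) * q + (s i : ℕ))).card := by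
            apply Finset.card_le_card
            intro p hp
            simp only [Finset.mem_filter, Finset.mem_range] at hp
            obtain ⟨hplen, hpb⟩ := hp
            have hpn : p < n := by simpa [hΨ] using hplen
            rw [hget s p hpn] at hpb
            by_cases hcond : ∃ i : Fin e, p = i * q + (s i : ℕ)
            · obtain ⟨i, hi⟩ := hcond
              exact Finset.mem_image.2 ⟨i, Finset.mem_univ i, hi.symm⟩
            · rw [if_neg hcond] at hpb; exact absurd hpb hab
        _ ≤ (Finset.univ : Finset (Fin e)).card := Finset.card_image_le
        _ = e := by simp
  have hinj : Function.Injective Ψ := by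
    intro s s' hss
    funext i
    have hb : (Ψ s).getD ((i : ℕ) * q + (s i : ℕ)) a = b := by
      rw [hget s _ (pos_lt s i), if_pos ⟨i, rfl⟩]
    rw [hss, hget s' _ (pos_lt s i)] at hb
    by_cases hcond : ∃ j : Fin e, (i : ℕ) * q + (s i : ℕ) = j * q + (s' j : ℕ)
    · obtain ⟨j, hj⟩ := hcond
      have hij : (i : ℕ) = (j : ℕ) := by
        rcases lt_trichotomy (i : ℕ) (j : ℕ) with h | h | h
        · have : ((i : ℕ) + 1) * q ≤ (j : ℕ) * q := Nat.mul_le_mul_right q (by omega)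
          have h4 : ((i : ℕ) + 1) * q = (i : ℕ) * q + q := by ring
          have := (s i).isLt
          omega
        · exact h
        · have : ((j : ℕ) + 1) * q ≤ (i : ℕ) * q := Nat.mul_le_mul_right q (by omega)
          have h4 : ((j : ℕ) + 1) * q = (j : ℕ) * q + q := by ring
          have := (s' j).isLt
          omega
      have : (s i : ℕ) = (s' j : ℕ) := by
        have : (i : ℕ) * q = (j : ℕ) * q := by rw [hij]
        omega
      have hji : j = i := Fin.ext hij.symm
      subst hji
      exact Fin.ext this
    · rw [if_neg hcond] at hb; exact absurd hb hab
  calc q ^ e = (Set.univ : Set (Fin e → Fin q)).ncard := by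
        rw [Set.ncard_univ, Nat.card_eq_fintype_card]
        simp [Fintype.card_fun]
    _ ≤ {w : List A | w.length = n ∧ aliveCnt a b e w}.ncard := by
        refine Set.ncard_le_ncard_of_injOn Ψ (fun s _ => hmem s) (hinj.injOn) ?_
        exact (List.finite_length_eq A n).subset (fun w hw => hw.1)

end Cnt

/-! ## Real-analytic lemmas -/

lemma tendsto_log_div_nat : Tendsto (fun n : ℕ => Real.log n / (n : ℝ)) atTop (𝓝 0) :=
  (Real.isLittleO_log_id_atTop.tendsto_div_nhds_zero).comp tendsto_natCast_atTop_atTop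

lemma tendsto_poly_div (K : ℕ) (e : ℕ) (act : ℕ → ℕ) (hup : ∀ n, 1 ≤ n → act n ≤ K * n ^ e)
    (d : ℤ) (hd : (e : ℤ) < d + 1) :
    Tendsto (fun n : ℕ => (act n : ℝ) / (n : ℝ) ^ (d + 1)) atTop (𝓝 0) := by
  have hgl : Tendsto (fun n : ℕ => (K : ℝ) * (n : ℝ) ^ ((e : ℤ) - (d + 1))) atTop
      (𝓝 ((K : ℝ) * 0)) := by
    exact Tendsto.const_mul _ ((tendsto_zpow_atTop_zero (by omega)).comp
      tendsto_natCast_atTop_atTop)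
  rw [mul_zero] at hgl
  apply squeeze_zero' ?_ ?_ hgl
  · filter_upwards with n
    positivity
  · filter_upwards [eventually_ge_atTop 1] with n hn
    have hn0 : (0 : ℝ) < (n : ℝ) := by exact_mod_cast hn
    have h1 : (act n : ℝ) ≤ (K : ℝ) * (n : ℝ) ^ e := by exact_mod_cast hup n hn
    calc (act n : ℝ) / (n : ℝ) ^ (d + 1)
        ≤ ((K : ℝ) * (n : ℝ) ^ e) / (n : ℝ) ^ (d + 1) :=
          div_le_div_of_nonneg_right h1 (zpow_pos hn0 _).le
      _ = (K : ℝ) * (n : ℝ) ^ ((e : ℤ) - (d + 1)) := by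
          rw [zpow_sub₀ (ne_of_gt hn0), zpow_natCast]
          field_simp

lemma limsup_le_zero_of_poly (K e : ℕ) (hK : 1 ≤ K) (act : ℕ → ℕ)
    (hup : ∀ᶠ n in atTop, act n ≤ K * n ^ e) :
    limsup (fun n : ℕ => Real.log (act n) / (n : ℝ)) atTop ≤ 0 := by
  set g : ℕ → ℝ := fun n => Real.log K / n + (e : ℝ) * (Real.log n / n) with hgdef
  have hg : Tendsto g atTop (𝓝 0) := by
    have h1 := tendsto_const_div_atTop_nhds_zero_nat (Real.log K)
    have h2 := tendsto_log_div_nat.const_mul (e : ℝ)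
    have := h1.add h2
    simpa using this
  have hle : ∀ᶠ n in atTop, Real.log (act n) / (n : ℝ) ≤ g n := by
    filter_upwards [hup, eventually_ge_atTop 1] with n hn hn1
    have hn0 : (0 : ℝ) < (n : ℝ) := by exact_mod_cast hn1
    have hgnn : 0 ≤ g n := by
      have := Real.log_natCast_nonneg K
      have := Real.log_natCast_nonneg n
      positivity
    by_cases h0 : act n = 0
    · rw [h0]
      simpa using hgnn
    · have hpos : (0 : ℝ) < (act n : ℝ) := by
        exact_mod_cast Nat.pos_of_ne_zero h0
      have hlog : Real.log (act n) ≤ Real.log K + (e : ℝ) * Real.log n := by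
        calc Real.log (act n) ≤ Real.log ((K : ℝ) * (n : ℝ) ^ e) := by
              apply Real.log_le_log hpos
              exact_mod_cast hn
          _ = Real.log K + (e : ℝ) * Real.log n := by
              rw [Real.log_mul (by positivity) (by positivity), Real.log_pow]
      show Real.log (act n) / (n : ℝ) ≤ Real.log K / (n : ℝ) + (e : ℝ) * (Real.log n / n)
      have heq : Real.log K / (n:ℝ) + (e : ℝ) * (Real.log n / n)
          = (Real.log K + (e : ℝ) * Real.log n) / n := by ring
      rw [heq]
      exact div_le_div_of_nonneg_right hlog hn0.le
  have hcb : IsCoboundedUnder (· ≤ ·) atTop (fun n : ℕ => Real.log (act n) / (n : ℝ)) := by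
    apply IsBoundedUnder.isCoboundedUnder_le
    apply isBoundedUnder_of
    refine ⟨0, fun n => ?_⟩
    have := Real.log_natCast_nonneg (act n)
    positivity
  calc limsup (fun n : ℕ => Real.log (act n) / (n : ℝ)) atTop
      ≤ limsup g atTop := limsup_le_limsup hle hcb hg.isBoundedUnder_le
    _ = 0 := hg.limsup_eq

lemma not_tendsto_poly (M N e : ℕ) (hM1 : 1 ≤ M) (act : ℕ → ℕ)
    (hlow : ∀ n, N ≤ n → n ^ e ≤ M * act n) (d : ℤ) (hd : d + 1 = (e : ℤ)) :
    ¬ Tendsto (fun n : ℕ => (act n : ℝ) / (n : ℝ) ^ (d + 1)) atTop (𝓝 0) := by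
  intro h
  have hM0 : (0 : ℝ) < (M : ℝ) := by exact_mod_cast hM1
  have hev := h.eventually (eventually_lt_nhds (show (0:ℝ) < 1 / M by positivity))
  obtain ⟨n, hn⟩ := ((eventually_ge_atTop 1).and ((eventually_ge_atTop N).and hev)).exists
  obtain ⟨hn1, hnN, hlt⟩ := hn
  have hnp : (0 : ℝ) < (n : ℝ) := by exact_mod_cast hn1
  rw [hd, zpow_natCast] at hlt
  rw [div_lt_div_iff₀ (by positivity) hM0] at hlt
  have hb : (n : ℝ) ^ e ≤ (M : ℝ) * (act n : ℝ) := by exact_mod_cast hlow n hnN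
  nlinarith [hb, hlt]

lemma limsup_le_exp (c m B : ℕ) (hc : 1 ≤ c) (hm : 1 ≤ m) (hB : 1 ≤ B) (act : ℕ → ℕ)
    (hup : ∀ n, act n ≤ c ^ (n / m) * B) :
    limsup (fun n : ℕ => Real.log (act n) / (n : ℝ)) atTop ≤ Real.log c / m := by
  have hlc : 0 ≤ Real.log c := Real.log_natCast_nonneg c
  have hlB : 0 ≤ Real.log B := Real.log_natCast_nonneg B
  have hm0 : (0 : ℝ) < (m : ℝ) := by exact_mod_cast hm
  set g : ℕ → ℝ := fun n => Real.log c / m + Real.log B / n with hgdef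
  have hg : Tendsto g atTop (𝓝 (Real.log c / m + 0)) :=
    tendsto_const_nhds.add (tendsto_const_div_atTop_nhds_zero_nat _)
  have hle : ∀ᶠ n in atTop, Real.log (act n) / (n : ℝ) ≤ g n := by
    filter_upwards [eventually_ge_atTop 1] with n hn1
    have hn0 : (0 : ℝ) < (n : ℝ) := by exact_mod_cast hn1
    have hgnn : 0 ≤ g n := by positivity
    by_cases h0 : act n = 0
    · rw [h0]; simpa using hgnn
    · have hpos : (0 : ℝ) < (act n : ℝ) := by exact_mod_cast Nat.pos_of_ne_zero h0
      have hlog : Real.log (act n) ≤ ((n : ℝ) / m) * Real.log c + Real.log B := by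
        calc Real.log (act n) ≤ Real.log ((c : ℝ) ^ (n / m) * (B : ℝ)) := by
              apply Real.log_le_log hpos
              exact_mod_cast hup n
          _ = ((n / m : ℕ) : ℝ) * Real.log c + Real.log B := by
              rw [Real.log_mul (by positivity) (by positivity), Real.log_pow]
          _ ≤ ((n : ℝ) / m) * Real.log c + Real.log B := by
              have := Nat.cast_div_le (α := ℝ) (m := n) (n := m)
              nlinarith
      calc Real.log (act n) / (n : ℝ)
          ≤ (((n : ℝ) / m) * Real.log c + Real.log B) / n :=
            div_le_div_of_nonneg_right hlog hn0.le
        _ = g n := by rw [hgdef]; field_simp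
  have hcb : IsCoboundedUnder (· ≤ ·) atTop (fun n : ℕ => Real.log (act n) / (n : ℝ)) := by
    apply IsBoundedUnder.isCoboundedUnder_le
    apply isBoundedUnder_of
    refine ⟨0, fun n => ?_⟩
    have := Real.log_natCast_nonneg (act n)
    positivity
  calc limsup (fun n : ℕ => Real.log (act n) / (n : ℝ)) atTop
      ≤ limsup g atTop := limsup_le_limsup hle hcb hg.isBoundedUnder_le
    _ = Real.log c / m + 0 := hg.limsup_eq
    _ = Real.log c / m := by ring

lemma not_limsup_le_exp (c m K : ℕ) (hc : 1 ≤ c) (hm : 1 ≤ m) (hK : 1 ≤ K) (act : ℕ → ℕ)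
    (hlow : ∀ n, c ^ (n / m) ≤ act n) (hbd : ∀ n, 1 ≤ n → act n ≤ K ^ n)
    (lam : ℝ) (hl : lam < Real.log c / m) :
    ¬ limsup (fun n : ℕ => Real.log (act n) / (n : ℝ)) atTop ≤ lam := by
  intro hcontra
  have hlc : 0 ≤ Real.log c := Real.log_natCast_nonneg c
  have hm0 : (0 : ℝ) < (m : ℝ) := by exact_mod_cast hm
  set f : ℕ → ℝ := fun n => Real.log (act n) / (n : ℝ) with hfdef
  set g : ℕ → ℝ := fun n => Real.log c / m - Real.log c / n with hgdef
  have hg : Tendsto g atTop (𝓝 (Real.log c / m - 0)) :=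
    tendsto_const_nhds.sub (tendsto_const_div_atTop_nhds_zero_nat _)
  have hle : ∀ᶠ n in atTop, g n ≤ f n := by
    filter_upwards [eventually_ge_atTop 1] with n hn1
    have hn0 : (0 : ℝ) < (n : ℝ) := by exact_mod_cast hn1
    have hcpos : (0 : ℝ) < (c : ℝ) ^ (n / m) := by positivity
    have hlog : ((n / m : ℕ) : ℝ) * Real.log c ≤ Real.log (act n) := by
      calc ((n / m : ℕ) : ℝ) * Real.log c = Real.log ((c : ℝ) ^ (n / m)) :=
            (Real.log_pow _ _).symm
        _ ≤ Real.log (act n) := Real.log_le_log hcpos (by exact_mod_cast hlow n)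
    have hdiv : (n : ℝ) / m - 1 ≤ ((n / m : ℕ) : ℝ) := by
      have := Nat.lt_mul_div_succ n (show 0 < m by omega)
      have hcast : (n : ℝ) < (m : ℝ) * (((n / m : ℕ) : ℝ) + 1) := by exact_mod_cast this
      have h2 : (n : ℝ) / m < ((n / m : ℕ) : ℝ) + 1 := by
        rw [div_lt_iff₀ hm0]
        linarith
      linarith
    have : ((n : ℝ) / m - 1) * Real.log c ≤ Real.log (act n) := by
      calc ((n : ℝ) / m - 1) * Real.log c ≤ ((n / m : ℕ) : ℝ) * Real.log c :=
            mul_le_mul_of_nonneg_right hdiv hlc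
        _ ≤ Real.log (act n) := hlog
    show Real.log c / (m : ℝ) - Real.log c / (n : ℝ) ≤ Real.log (act n) / (n : ℝ)
    rw [show Real.log c / (m : ℝ) - Real.log c / (n : ℝ)
        = (((n : ℝ) / m - 1) * Real.log c) / n by field_simp]
    exact div_le_div_of_nonneg_right this hn0.le
  have hbdf : IsBoundedUnder (· ≤ ·) atTop f := by
    apply isBoundedUnder_of_eventually_le (a := Real.log K)
    filter_upwards [eventually_ge_atTop 1] with n hn1
    have hn0 : (0 : ℝ) < (n : ℝ) := by exact_mod_cast hn1
    have hlK : 0 ≤ Real.log K := Real.log_natCast_nonneg K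
    show Real.log (act n) / (n : ℝ) ≤ Real.log K
    by_cases h0 : act n = 0
    · rw [h0]; simpa using hlK
    · have hpos : (0 : ℝ) < (act n : ℝ) := by exact_mod_cast Nat.pos_of_ne_zero h0
      have hll : Real.log (act n) ≤ (n : ℝ) * Real.log K := by
        calc Real.log (act n) ≤ Real.log ((K : ℝ) ^ n) :=
              Real.log_le_log hpos (by exact_mod_cast hbd n hn1)
          _ = (n : ℝ) * Real.log K := Real.log_pow _ _
      rw [div_le_iff₀ hn0]
      linarith [hll]
  have hcbg : IsCoboundedUnder (· ≤ ·) atTop g :=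
    IsBoundedUnder.isCoboundedUnder_le hg.isBoundedUnder_ge
  have key : Real.log c / m - 0 ≤ limsup f atTop := by
    rw [← hg.limsup_eq]
    exact limsup_le_limsup hle hcbg hbdf
  rw [sub_zero] at key
  linarith


/-! ## Inclusion lemmas -/

lemma SP_mono (A : Type*) {d d' : ℤ} (h : d ≤ d') : SP A d ⊆ SP A d' := by
  rintro t ⟨hfe, ht⟩
  refine ⟨hfe, ?_⟩
  apply squeeze_zero' ?_ ?_ ht
  · filter_upwards with n
    positivity
  · filter_upwards [eventually_ge_atTop 1] with n hn
    have hn1 : (1 : ℝ) ≤ (n : ℝ) := by exact_mod_cast hn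
    exact div_le_div_of_nonneg_left (by positivity) (zpow_pos (by linarith) _)
      (zpow_le_zpow_right₀ hn1 (by omega))

lemma SP_subset_SE0 (A : Type*) {d : ℤ} (hd : -1 ≤ d) : SP A d ⊆ SE A 0 := by
  rintro t ⟨hfe, ht⟩
  refine ⟨hfe, ?_⟩
  have hev : ∀ᶠ n in atTop, activity t n ≤ 1 * n ^ (d + 1).toNat := by
    filter_upwards [ht.eventually (eventually_lt_nhds one_pos), eventually_ge_atTop 1]
      with n h1 hn
    have hn0 : (0 : ℝ) < (n : ℝ) := by exact_mod_cast hn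
    have hzp : (0 : ℝ) < (n : ℝ) ^ (d + 1) := zpow_pos hn0 _
    have h2 : (activity t n : ℝ) < (n : ℝ) ^ (d + 1) := (div_lt_one hzp).1 h1
    have h3 : (n : ℝ) ^ (d + 1) = ((n ^ (d + 1).toNat : ℕ) : ℝ) := by
      rw [show d + 1 = ((d + 1).toNat : ℤ) by omega, zpow_natCast]
      push_cast
      rfl
    rw [h3] at h2
    have := Nat.cast_lt (α := ℝ) |>.1 h2
    omega
  exact limsup_le_zero_of_poly 1 _ le_rfl _ hev

lemma SE_mono (A : Type*) {l l' : ℝ} (h : l ≤ l') : SE A l ⊆ SE A l' :=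
  fun _ ht => ⟨ht.1, ht.2.trans h⟩


/-! ## Existence of product rates in any subinterval of `[0, log k]` -/

lemma exists_rate (k : ℕ) (hk : 2 ≤ k) (lam lam' : ℝ) (h0 : 0 ≤ lam) (h1 : lam < lam')
    (h2 : lam' ≤ Real.log k) :
    ∃ m i j : ℕ, 0 < m ∧ i + j < m ∧
      (m : ℝ) * lam < (i : ℝ) * Real.log k + (j : ℝ) * Real.log 2 ∧
      (i : ℝ) * Real.log k + (j : ℝ) * Real.log 2 < (m : ℝ) * lam' := by
  have hk2 : (2 : ℝ) ≤ (k : ℝ) := by exact_mod_cast hk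
  have hL : 0 < Real.log k := Real.log_pos (by linarith)
  have hl2 : 0 < Real.log 2 := Real.log_pos (by norm_num)
  have hlam_lt : lam < Real.log k := lt_of_lt_of_le h1 h2
  have hfrac : 0 < 1 - lam / Real.log k := by
    have : lam / Real.log k < 1 := (div_lt_one hL).2 hlam_lt
    linarith
  obtain ⟨J, hJ⟩ := exists_nat_ge (Real.log k / Real.log 2)
  obtain ⟨m, hm⟩ := exists_nat_gt
    (max (Real.log 2 / (lam' - lam)) (((J : ℝ) + 1) / (1 - lam / Real.log k)))
  have hm1 : Real.log 2 / (lam' - lam) < (m : ℝ) := lt_of_le_of_lt (le_max_left _ _) hm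
  have hm2 : ((J : ℝ) + 1) / (1 - lam / Real.log k) < (m : ℝ) :=
    lt_of_le_of_lt (le_max_right _ _) hm
  have hmpos : 0 < m := by
    have hp : (0 : ℝ) < Real.log 2 / (lam' - lam) := by
      apply div_pos hl2
      linarith
    have : (0 : ℝ) < (m : ℝ) := lt_trans hp hm1
    exact_mod_cast this
  set i := ⌊(m : ℝ) * lam / Real.log k⌋₊ with hi
  have hiL : (i : ℝ) * Real.log k ≤ (m : ℝ) * lam := by
    have hfl := Nat.floor_le (show (0 : ℝ) ≤ (m : ℝ) * lam / Real.log k by positivity)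
    calc (i : ℝ) * Real.log k ≤ ((m : ℝ) * lam / Real.log k) * Real.log k :=
          mul_le_mul_of_nonneg_right hfl hL.le
      _ = (m : ℝ) * lam := by field_simp
  have hiU : (m : ℝ) * lam < ((i : ℝ) + 1) * Real.log k := by
    have hfl := Nat.lt_floor_add_one ((m : ℝ) * lam / Real.log k)
    calc (m : ℝ) * lam = ((m : ℝ) * lam / Real.log k) * Real.log k := by field_simp
      _ < ((i : ℝ) + 1) * Real.log k := mul_lt_mul_of_pos_right hfl hL
  set x := ((m : ℝ) * lam - (i : ℝ) * Real.log k) / Real.log 2 with hx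
  have hx0 : 0 ≤ x := div_nonneg (by linarith) hl2.le
  set j := ⌊x⌋₊ + 1 with hj
  have hjx : x < (j : ℝ) := by
    have := Nat.lt_floor_add_one x
    push_cast [hj]
    linarith
  have hjx' : (j : ℝ) ≤ x + 1 := by
    have := Nat.floor_le hx0
    push_cast [hj]
    linarith
  have hlow : (m : ℝ) * lam < (i : ℝ) * Real.log k + (j : ℝ) * Real.log 2 := by
    have h := mul_lt_mul_of_pos_right hjx hl2
    rw [hx, div_mul_cancel₀ _ (ne_of_gt hl2)] at h
    linarith
  have hup : (i : ℝ) * Real.log k + (j : ℝ) * Real.log 2 < (m : ℝ) * lam' := by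
    have h := mul_le_mul_of_nonneg_right hjx' hl2.le
    rw [hx, add_mul, one_mul, div_mul_cancel₀ _ (ne_of_gt hl2)] at h
    have hl2m : Real.log 2 < (m : ℝ) * (lam' - lam) := by
      rw [div_lt_iff₀ (by linarith : (0:ℝ) < lam' - lam)] at hm1
      linarith [hm1]
    nlinarith
  have hijm : i + j < m := by
    have hxb : x < Real.log k / Real.log 2 := by
      rw [hx, div_lt_div_iff₀ hl2 hl2]
      nlinarith [hiU]
    have hjJ : (j : ℝ) ≤ (J : ℝ) + 1 := by
      have := Nat.floor_le hx0
      push_cast [hj]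
      linarith [hxb.trans_le hJ]
    have hib : (i : ℝ) ≤ (m : ℝ) * lam / Real.log k :=
      Nat.floor_le (by positivity)
    have hm2' : (J : ℝ) + 1 < (m : ℝ) * (1 - lam / Real.log k) := by
      rw [div_lt_iff₀ hfrac] at hm2
      linarith
    have : (i : ℝ) + (j : ℝ) < (m : ℝ) := by
      have hexp : (m : ℝ) * (1 - lam / Real.log k) = (m : ℝ) - (m : ℝ) * lam / Real.log k := by
        ring
      rw [hexp] at hm2'
      linarith
    exact_mod_cast this
  exact ⟨m, i, j, hmpos, hijm, hlow, hup⟩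

/-! ## Polynomial witnesses -/

section PolyW

variable [Fintype A] [DecidableEq A] {a b : A}

lemma Wcnt_isFEnd (a b : A) (e : ℕ) : IsFEnd (FF a b (aliveCnt a b e)) :=
  isFEnd_FF (good_aliveCnt a b e) (nerode_aliveCnt a b e)

lemma Wcnt_act (hab : a ≠ b) (e n : ℕ) :
    activity (FF a b (aliveCnt a b e)) n
      = {w : List A | w.length = n ∧ aliveCnt a b e w}.ncard :=
  activity_FF hab (good_aliveCnt a b e) n

lemma Wcnt_mem_SP (hab : a ≠ b) (e : ℕ) (d : ℤ) (hd : (e : ℤ) < d + 1) :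
    FF a b (aliveCnt a b e) ∈ SP A d := by
  refine ⟨Wcnt_isFEnd a b e, ?_⟩
  apply tendsto_poly_div (e + 1) e _ ?_ d hd
  intro n hn
  rw [Wcnt_act hab e n]
  exact cnt_upper hab e n hn

lemma Wcnt_mem_SE0 (hab : a ≠ b) (e : ℕ) : FF a b (aliveCnt a b e) ∈ SE A 0 := by
  refine ⟨Wcnt_isFEnd a b e, ?_⟩
  apply limsup_le_zero_of_poly (e + 1) e (by omega)
  filter_upwards [eventually_ge_atTop 1] with n hn
  rw [Wcnt_act hab e n]
  exact cnt_upper hab e n hn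

lemma Wcnt_not_SP (hab : a ≠ b) (e : ℕ) (d : ℤ) (hd : d + 1 = (e : ℤ)) :
    FF a b (aliveCnt a b e) ∉ SP A d := by
  rintro ⟨-, ht⟩
  refine not_tendsto_poly ((2 * e + 2) ^ e) (e + 1) e
    (Nat.one_le_pow _ _ (by omega)) _ ?_ d hd ht
  intro n hn
  set q := n / (e + 1) with hqdef
  have hq1 : 1 ≤ q := (Nat.one_le_div_iff (by omega)).2 hn
  have heq : e * q ≤ n := by
    calc e * q ≤ (e + 1) * q := Nat.mul_le_mul_right q (by omega)
      _ ≤ n := by rw [hqdef, mul_comm]; exact Nat.div_mul_le_self n (e + 1)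
  have hlq := cnt_lower hab e q n hq1 heq
  have hn2 : n ≤ 2 * ((e + 1) * q) := by
    have h1 := Nat.lt_mul_div_succ n (show 0 < e + 1 by omega)
    have h2 : (e + 1) * (q + 1) = (e + 1) * q + (e + 1) := by ring
    have h3 : e + 1 ≤ (e + 1) * q := Nat.le_mul_of_pos_right _ hq1
    rw [← hqdef] at h1
    omega
  calc n ^ e ≤ (2 * ((e + 1) * q)) ^ e := Nat.pow_le_pow_left hn2 e
    _ = (2 * e + 2) ^ e * q ^ e := by rw [show 2*((e+1)*q) = (2*e+2)*q by ring, mul_pow]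
    _ ≤ (2 * e + 2) ^ e * activity (FF a b (aliveCnt a b e)) n := by
        apply Nat.mul_le_mul_left
        rw [Wcnt_act hab e n]
        exact hlq

end PolyW

/-! ## Exponential witnesses -/

def Cexp (a b : A) (i j m : ℕ) : ℕ → Set A :=
  fun p => if p % m < i then Set.univ else if p % m < i + j then {a, b} else {a}

section ExpW

variable [Fintype A] {a b : A}

lemma Cexp_per (a b : A) (i j m p : ℕ) : Cexp a b i j m (p + m) = Cexp a b i j m p := by
  unfold Cexp
  rw [Nat.add_mod_right]

lemma Cexp_ncard_le (a b : A) (i j m p : ℕ) :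
    (Cexp a b i j m p).ncard ≤ Fintype.card A := by
  calc (Cexp a b i j m p).ncard ≤ (Set.univ : Set A).ncard :=
        Set.ncard_le_ncard (Set.subset_univ _) Set.finite_univ
    _ = Fintype.card A := by rw [Set.ncard_univ, Nat.card_eq_fintype_card]

lemma Cexp_ncard_pos (a b : A) (i j m p : ℕ) : 1 ≤ (Cexp a b i j m p).ncard := by
  have : a ∈ Cexp a b i j m p := by
    unfold Cexp
    split_ifs
    · trivial
    · left; rfl
    · rfl
  have h := (Set.ncard_pos (Set.toFinite _)).2 ⟨a, this⟩
  omega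

lemma Cexp_prod (hab : a ≠ b) (i j m : ℕ) (hij : i + j < m) :
    ∏ p ∈ Finset.range m, (Cexp a b i j m p).ncard = Fintype.card A ^ i * 2 ^ j := by
  have hval : ∀ p, p < m → (Cexp a b i j m p).ncard
      = (if p < i then Fintype.card A else if p < i + j then 2 else 1) := by
    intro p hp
    unfold Cexp
    rw [Nat.mod_eq_of_lt hp]
    split_ifs
    · rw [Set.ncard_univ, Nat.card_eq_fintype_card]
    · exact Set.ncard_pair hab
    · exact Set.ncard_singleton a
  set G : ℕ → ℕ := fun p => if p < i then Fintype.card A else if p < i + j then 2 else 1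
    with hG
  rw [Finset.prod_congr rfl (fun p hp => hval p (Finset.mem_range.1 hp))]
  set r := m - (i + j) with hr
  have hm' : m = i + (j + r) := by omega
  rw [hm', Finset.prod_range_add, Finset.prod_range_add]
  have h1 : ∏ p ∈ Finset.range i, G p = Fintype.card A ^ i := by
    have hcongr : ∀ p ∈ Finset.range i, G p = Fintype.card A := by
      intro p hp
      show (if p < i then Fintype.card A else if p < i + j then 2 else 1) = Fintype.card A
      rw [if_pos (Finset.mem_range.1 hp)]
    rw [Finset.prod_congr rfl hcongr, Finset.prod_const, Finset.card_range]
  have h2 : ∏ p ∈ Finset.range j, G (i + p) = 2 ^ j := by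
    have hcongr : ∀ p ∈ Finset.range j, G (i + p) = 2 := by
      intro p hp
      have hpj := Finset.mem_range.1 hp
      show (if i + p < i then Fintype.card A else if i + p < i + j then 2 else 1) = 2
      rw [if_neg (by omega), if_pos (by omega)]
    rw [Finset.prod_congr rfl hcongr, Finset.prod_const, Finset.card_range]
  have h3 : ∏ p ∈ Finset.range r, G (i + (j + p)) = 1 := by
    have hcongr : ∀ p ∈ Finset.range r, G (i + (j + p)) = 1 := by
      intro p hp
      show (if i + (j + p) < i then Fintype.card A else if i + (j + p) < i + j then 2 else 1) = 1
      rw [if_neg (by omega), if_neg (by omega)]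
    rw [Finset.prod_congr rfl hcongr, Finset.prod_const, Finset.card_range, one_pow]
  rw [h1, h2, h3]
  ring

lemma exp_witness (hab : a ≠ b) (m i j : ℕ) (hm : 0 < m) (hij : i + j < m)
    (lam lam' : ℝ)
    (hlow : (m : ℝ) * lam < (i : ℝ) * Real.log (Fintype.card A) + (j : ℝ) * Real.log 2)
    (hup : (i : ℝ) * Real.log (Fintype.card A) + (j : ℝ) * Real.log 2 < (m : ℝ) * lam') :
    ∃ t : List A → List A, t ∈ SE A lam' ∧ t ∉ SE A lam := by
  have hk2 : 2 ≤ Fintype.card A := Fintype.one_lt_card_iff_nontrivial.2 ⟨a, b, hab⟩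
  set k := Fintype.card A with hk
  set C : ℕ → Set A := Cexp a b i j m with hC
  set c : ℕ := k ^ i * 2 ^ j with hc
  have hkpos : 0 < k := by omega
  have hc0 : 0 < c := Nat.mul_pos (Nat.pow_pos hkpos) (Nat.pow_pos (by omega : 0 < 2))
  have hc1 : 1 ≤ c := hc0
  have hkm : 0 < k ^ m := Nat.pow_pos hkpos
  set g : ℕ → ℕ := fun p => (C p).ncard with hg
  have hg1 : ∀ p, 1 ≤ g p := fun p => Cexp_ncard_pos a b i j m p
  have hgk : ∀ p, g p ≤ k := fun p => Cexp_ncard_le a b i j m p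
  have hgper : ∀ p, g (p + m) = g p := fun p => by rw [hg]; simp only [hC, Cexp_per]
  have hgm : ∏ p ∈ Finset.range m, g p = c := Cexp_prod hab i j m hij
  have hkill : ∀ N, ∃ p, N ≤ p ∧ ∃ x, x ∉ C p := by
    intro N
    have hmN : N ≤ m * N := Nat.le_mul_of_pos_left N hm
    refine ⟨i + j + m * N, by omega, b, ?_⟩
    rw [hC]
    unfold Cexp
    have hmod : (i + j + m * N) % m = i + j := by
      rw [Nat.add_mul_mod_self_left]
      exact Nat.mod_eq_of_lt hij
    rw [hmod, if_neg (by omega), if_neg (by omega)]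
    simp only [Set.mem_singleton_iff]
    exact fun h => hab h.symm
  have hgood : Good (aliveP a C) := good_aliveP a hkill
  have hfe : IsFEnd (FF a b (aliveP a C)) :=
    isFEnd_FF hgood (nerode_aliveP a hm (fun p => by rw [hC]; exact Cexp_per a b i j m p))
  set t := FF a b (aliveP a C) with hT
  have hact : ∀ n, activity t n = ∏ p ∈ Finset.range n, g p := by
    intro n
    rw [hT, activity_FF hab hgood, count_aliveP a C n]
  have hbounds := fun n => prod_bounds g m k hm hg1 hgk hgper n
  have hactlow : ∀ n, c ^ (n / m) ≤ activity t n := by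
    intro n
    rw [hact n, ← hgm]
    exact (hbounds n).1
  have hactup : ∀ n, activity t n ≤ c ^ (n / m) * k ^ m := by
    intro n
    rw [hact n, ← hgm]
    exact (hbounds n).2
  have hlogc : Real.log c = (i : ℝ) * Real.log k + (j : ℝ) * Real.log 2 := by
    rw [hc]
    push_cast
    rw [Real.log_mul (by positivity) (by positivity), Real.log_pow, Real.log_pow]
  have hm0 : (0 : ℝ) < (m : ℝ) := by exact_mod_cast hm
  have hrate1 : lam < Real.log c / m := by
    rw [lt_div_iff₀ hm0, hlogc]
    linarith [hlow]
  have hrate2 : Real.log c / m < lam' := by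
    rw [div_lt_iff₀ hm0, hlogc]
    linarith [hup]
  refine ⟨t, ⟨hfe, ?_⟩, ?_⟩
  · exact (limsup_le_exp c m (k ^ m) hc1 hm hkm _ hactup).trans hrate2.le
  · rintro ⟨-, hls⟩
    refine not_limsup_le_exp c m (c * k ^ m) hc1 hm (Nat.mul_pos hc0 hkm) _ hactlow ?_
      lam hrate1 hls
    intro n hn
    calc activity t n ≤ c ^ (n / m) * k ^ m := hactup n
      _ ≤ c ^ n * (k ^ m) ^ n := by
          apply Nat.mul_le_mul
          · exact Nat.pow_le_pow_right hc1 (Nat.div_le_self n m)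
          · exact Nat.le_self_pow (by omega) _
      _ = (c * k ^ m) ^ n := (mul_pow _ _ _).symm

end ExpW
/-- Strictness of the activity hierarchy (for `#Σ ≥ 2`):
`SP(-1) ⊊ SP(d₁) ⊊ SP(d₂) ⊊ SE(0) ⊊ SE(λ₁) ⊊ SE(λ₂) ⊊ SE(log #Σ)` for all integers
`-1 < d₁ < d₂` and reals `0 < λ₁ < λ₂ < log #Σ`. -/
theorem hierarchy_strict {A : Type*} [Fintype A] (hA : 2 ≤ Fintype.card A)
    (d₁ d₂ : ℤ) (hd₁ : -1 < d₁) (hd₁₂ : d₁ < d₂)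
    (l₁ l₂ : ℝ) (hl₁ : 0 < l₁) (hl₁₂ : l₁ < l₂)
    (hl₂ : l₂ < Real.log (Fintype.card A)) :
    SP A (-1) ⊂ SP A d₁ ∧ SP A d₁ ⊂ SP A d₂ ∧ SP A d₂ ⊂ SE A 0 ∧
    SE A 0 ⊂ SE A l₁ ∧ SE A l₁ ⊂ SE A l₂ ∧
    SE A l₂ ⊂ SE A (Real.log (Fintype.card A)) := by
  classical
  obtain ⟨a, b, hab⟩ : ∃ a b : A, a ≠ b := Fintype.exists_pair_of_one_lt_card (by omega)
  have he₁ : (((d₁ + 1).toNat : ℕ) : ℤ) = d₁ + 1 := Int.toNat_of_nonneg (by omega)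
  have he₂ : (((d₂ + 1).toNat : ℕ) : ℤ) = d₂ + 1 := Int.toNat_of_nonneg (by omega)
  refine ⟨?_, ?_, ?_, ?_, ?_, ?_⟩
  · rw [Set.ssubset_iff_of_subset (SP_mono A (by omega))]
    exact ⟨FF a b (aliveCnt a b 0), Wcnt_mem_SP hab 0 d₁ (by push_cast; omega),
      Wcnt_not_SP hab 0 (-1) (by norm_num)⟩
  · rw [Set.ssubset_iff_of_subset (SP_mono A (by omega))]
    exact ⟨FF a b (aliveCnt a b (d₁ + 1).toNat),
      Wcnt_mem_SP hab _ d₂ (by rw [he₁]; omega),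
      Wcnt_not_SP hab _ d₁ he₁.symm⟩
  · rw [Set.ssubset_iff_of_subset (SP_subset_SE0 A (by omega))]
    exact ⟨FF a b (aliveCnt a b (d₂ + 1).toNat), Wcnt_mem_SE0 hab _,
      Wcnt_not_SP hab _ d₂ he₂.symm⟩
  · rw [Set.ssubset_iff_of_subset (SE_mono A hl₁.le)]
    obtain ⟨m, i, j, hm, hij, hlo, hup⟩ := exists_rate (Fintype.card A) hA 0 l₁ le_rfl hl₁
      ((hl₁₂.trans hl₂).le)
    obtain ⟨t, htm, htn⟩ := exp_witness hab m i j hm hij 0 l₁ hlo hup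
    exact ⟨t, htm, htn⟩
  · rw [Set.ssubset_iff_of_subset (SE_mono A hl₁₂.le)]
    obtain ⟨m, i, j, hm, hij, hlo, hup⟩ := exists_rate (Fintype.card A) hA l₁ l₂ hl₁.le hl₁₂
      hl₂.le
    obtain ⟨t, htm, htn⟩ := exp_witness hab m i j hm hij l₁ l₂ hlo hup
    exact ⟨t, htm, htn⟩
  · rw [Set.ssubset_iff_of_subset (SE_mono A hl₂.le)]
    obtain ⟨m, i, j, hm, hij, hlo, hup⟩ := exists_rate (Fintype.card A) hA l₂
      (Real.log (Fintype.card A)) (hl₁.trans hl₁₂).le hl₂ le_rfl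
    obtain ⟨t, htm, htn⟩ := exp_witness hab m i j hm hij l₂ (Real.log (Fintype.card A)) hlo hup
    exact ⟨t, htm, htn⟩

end AutHier
end
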